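/- arXiv:math/0702106 — 15 statements merged into one kernel-verified Lean document; each statement's English description precedes it below -/
import Mathlib

section
/- Let $n$ and $m$ be integers with $0 < m < n$. The map sending a fraction $h/k$ to $(k-h)/k$ (i.e., sending a rational $q$ to $1-q$) is an order-reversing bijection from the Farey subsequence $\mathcal{F}(\mathbb{B}(n),m)$ onto the Farey subsequence $\mathcal{F}(\mathbb{B}(n),n-m)$. -/
/-!
Passing from `q = h/k` to `1 - q = (k - h)/k` keeps the fraction reduced, so it swaps the
numerator `h` with `k - h` and leaves the denominator alone. The two bounds `h ≤ m` and
`k - h ≤ n - m` defining `𝓕(𝔹(n), m)` are therefore exchanged, which is exactly the pair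
defining `𝓕(𝔹(n), n - m)`; since `q ↦ 1 - q` is an order-reversing involution, it is a
bijection between the two sets.
-/

/-- The Farey subsequence `𝓕(𝔹(n), m)`: rationals `q` with `0 ≤ q ≤ 1` whose
reduced fraction `h/k` satisfies `k ≤ n`, `h ≤ m` and `k - h ≤ n - m`. -/
def fareyB (n m : ℕ) : Set ℚ :=
  {q : ℚ | 0 ≤ q ∧ q ≤ 1 ∧ q.den ≤ n ∧ q.num ≤ (m : ℤ) ∧
    (q.den : ℤ) - q.num ≤ (n : ℤ) - (m : ℤ)}

namespace Rat

theorem den_one_sub (q : ℚ) : (1 - q).den = q.den := by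
  simp

theorem num_one_sub (q : ℚ) : (1 - q).num = q.den - q.num := by
  have h : ((1 - q).num : ℚ) = q.den - q.num := by
    rw [← mul_den_eq_num, den_one_sub, sub_mul, one_mul, mul_den_eq_num]
  exact_mod_cast h

end Rat

theorem mapsTo_one_sub_fareyB {n m : ℕ} (hmn : m ≤ n) :
    Set.MapsTo (fun q : ℚ => 1 - q) (fareyB n m) (fareyB n (n - m)) := by
  rintro q ⟨hq0, hq1, hden, hnum, hcomp⟩
  refine ⟨by linarith, by linarith, ?_, ?_, ?_⟩
  · rwa [Rat.den_one_sub]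
  · rw [Rat.num_one_sub, Nat.cast_sub hmn]
    exact hcomp
  · rw [Rat.num_one_sub, Rat.den_one_sub, Nat.cast_sub hmn]
    linarith

theorem farey_boolean_complement_bijection_general (n m : ℕ) (hmn : m < n) :
    Set.BijOn (fun q : ℚ => 1 - q) (fareyB n m) (fareyB n (n - m)) ∧
    StrictAntiOn (fun q : ℚ => 1 - q) (fareyB n m) := by
  have hback : Set.MapsTo (fun q : ℚ => 1 - q) (fareyB n (n - m)) (fareyB n m) := by
    simpa only [Nat.sub_sub_self hmn.le] using mapsTo_one_sub_fareyB (n.sub_le m)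
  have hinv : Set.InvOn (fun q : ℚ => 1 - q) (fun q : ℚ => 1 - q) (fareyB n m)
      (fareyB n (n - m)) :=
    ⟨fun q _ => sub_sub_cancel 1 q, fun q _ => sub_sub_cancel 1 q⟩
  exact ⟨hinv.bijOn (mapsTo_one_sub_fareyB hmn.le) hback,
    fun _ _ _ _ hab => sub_lt_sub_left hab 1⟩

/-- The map `q ↦ 1 - q` (i.e. `h/k ↦ (k-h)/k`) is an order-reversing bijection
from `𝓕(𝔹(n), m)` onto `𝓕(𝔹(n), n-m)`. -/
theorem farey_boolean_complement_bijection (n m : ℕ) (hm : 0 < m) (hmn : m < n) :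
    Set.BijOn (fun q : ℚ => 1 - q) (fareyB n m) (fareyB n (n - m)) ∧
    StrictAntiOn (fun q : ℚ => 1 - q) (fareyB n m) :=
  farey_boolean_complement_bijection_general n m hmn
end

section
/- Let $m$ be a positive integer. The map sending a fraction $h/k$ to $(k-2h)/(2k-3h)$ (i.e., sending a rational $q$ to $(1-2q)/(2-3q)$) is an order-reversing bijection from the left halfsequence $\mathcal{F}^{\le 1/2}(\mathbb{B}(2m),m)$ onto itself. -/
/-- The Farey subsequence `𝓕(𝔹(2m), m)`: rationals `q` with `0 ≤ q ≤ 1` whose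
reduced fraction `h/k` satisfies `k ≤ 2m`, `h ≤ m` and `k - h ≤ m`. -/
def fareyB2 (m : ℕ) : Set ℚ :=
  {q : ℚ | 0 ≤ q ∧ q ≤ 1 ∧ q.den ≤ 2 * m ∧ q.num ≤ (m : ℤ) ∧
    (q.den : ℤ) - q.num ≤ (m : ℤ)}

/-- The left halfsequence `𝓕^{≤1/2}(𝔹(2m), m)`. -/
def fareyB2Left (m : ℕ) : Set ℚ := {q ∈ fareyB2 m | q ≤ 1 / 2}

lemma fareyAux_denpos {q : ℚ} (hq : q ∈ fareyB2Left m) :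
    (0 : ℚ) < 2 - 3 * q := by
  obtain ⟨⟨h0, h1, _, _, _⟩, hhalf⟩ := hq
  linarith

lemma fareyAux_maps {m : ℕ} {q : ℚ} (hq : q ∈ fareyB2Left m) :
    (1 - 2 * q) / (2 - 3 * q) ∈ fareyB2Left m := by
  obtain ⟨⟨h0, h1, hden, hnum, hdiff⟩, hhalf⟩ := hq
  set h : ℤ := q.num with hh
  set k : ℤ := (q.den : ℤ) with hk
  have hk0 : (0 : ℤ) < k := by rw [hk]; exact_mod_cast q.pos
  have hqe : q = (h : ℚ) / (k : ℚ) := by rw [hh, hk]; exact_mod_cast (Rat.num_div_den q).symm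
  have hkQ : (0 : ℚ) < (k : ℚ) := by exact_mod_cast hk0
  have hnum0 : 0 ≤ h := by
    rw [hh]; exact Rat.num_nonneg.mpr h0
  have h2hk : 2 * h ≤ k := by
    have : q ≤ 1 / 2 := hhalf
    rw [hqe] at this
    rw [div_le_div_iff₀ hkQ (by norm_num)] at this
    have h' : (2 * h : ℚ) ≤ (k : ℚ) := by push_cast; linarith
    exact_mod_cast h'
  have hd0 : (0 : ℤ) < 2 * k - 3 * h := by linarith
  have hre : (1 - 2 * q) / (2 - 3 * q) = ((k - 2 * h : ℤ) : ℚ) / ((2 * k - 3 * h : ℤ) : ℚ) := by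
    rw [hqe]
    have h1 : (k : ℚ) ≠ 0 := hkQ.ne'
    have h2 : ((2 * k - 3 * h : ℤ) : ℚ) ≠ 0 := by exact_mod_cast hd0.ne'
    have h3 : (2 : ℚ) - 3 * ((h : ℚ) / (k : ℚ)) ≠ 0 := by
      have : (2 : ℚ) - 3 * ((h : ℚ) / (k : ℚ)) = ((2 * k - 3 * h : ℤ) : ℚ) / k := by
        push_cast; field_simp
      rw [this]; exact div_ne_zero h2 h1
    push_cast at h2 ⊢; field_simp
  have hcop : Nat.Coprime (k - 2 * h).natAbs (2 * k - 3 * h).natAbs := by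
    have hc : Nat.Coprime h.natAbs k.natAbs := q.reduced
    have hcz : IsCoprime h k := Int.isCoprime_iff_gcd_eq_one.mpr hc
    apply Int.isCoprime_iff_gcd_eq_one.mp
    obtain ⟨a, b, hab⟩ := hcz
    exact ⟨-(2 * a + 3 * b), a + 2 * b, by linear_combination hab⟩
  have hrnum : ((1 - 2 * q) / (2 - 3 * q)).num = k - 2 * h := by
    rw [hre]; exact Rat.num_div_eq_of_coprime hd0 hcop
  have hrden : (((1 - 2 * q) / (2 - 3 * q)).den : ℤ) = 2 * k - 3 * h := by
    rw [hre]; exact Rat.den_div_eq_of_coprime hd0 hcop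
  have hdQ : (0 : ℚ) < ((2 * k - 3 * h : ℤ) : ℚ) := by exact_mod_cast hd0
  have hnQ : (0 : ℚ) ≤ ((k - 2 * h : ℤ) : ℚ) := by exact_mod_cast by linarith [h2hk]
  refine ⟨⟨?_, ?_, ?_, ?_, ?_⟩, ?_⟩
  · rw [hre]; positivity
  · rw [hre, div_le_one hdQ]
    have : (k : ℤ) - 2 * h ≤ 2 * k - 3 * h := by linarith
    exact_mod_cast this
  · have : (2 * k - 3 * h : ℤ) ≤ 2 * m := by omega
    omega
  · rw [hrnum]; omega
  · rw [hrnum, hrden]; omega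
  · rw [hre, div_le_div_iff₀ hdQ (by norm_num)]
    have : 2 * (k - 2 * h) ≤ 2 * k - 3 * h := by linarith [hnum0]
    exact_mod_cast by push_cast; linarith [this]

lemma fareyAux_invol {m : ℕ} {q : ℚ} (hq : q ∈ fareyB2Left m) :
    (1 - 2 * ((1 - 2 * q) / (2 - 3 * q))) / (2 - 3 * ((1 - 2 * q) / (2 - 3 * q))) = q := by
  have h1 : (0 : ℚ) < 2 - 3 * q := fareyAux_denpos hq
  have h2 : (0 : ℚ) < 2 - 3 * ((1 - 2 * q) / (2 - 3 * q)) := fareyAux_denpos (fareyAux_maps hq)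
  have h1' : (2 - 3 * q) ≠ 0 := h1.ne'
  rw [div_eq_iff h2.ne']
  linear_combination (-1 : ℚ) * div_mul_cancel₀ (1 - 2 * q) h1'

lemma fareyAux_anti (m : ℕ) :
    StrictAntiOn (fun q : ℚ => (1 - 2 * q) / (2 - 3 * q)) (fareyB2Left m) := by
  intro a ha b hb hab
  have h1 : (0 : ℚ) < 2 - 3 * a := fareyAux_denpos ha
  have h2 : (0 : ℚ) < 2 - 3 * b := fareyAux_denpos hb
  simp only
  rw [div_lt_div_iff₀ h2 h1]
  nlinarith

/-- The map `q ↦ (1-2q)/(2-3q)` (i.e. `h/k ↦ (k-2h)/(2k-3h)`) is an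
order-reversing bijection from `𝓕^{≤1/2}(𝔹(2m), m)` onto itself. -/
theorem fareyB2Left_self_bijection (m : ℕ) (hm : 0 < m) :
    Set.BijOn (fun q : ℚ => (1 - 2 * q) / (2 - 3 * q)) (fareyB2Left m) (fareyB2Left m) ∧
    StrictAntiOn (fun q : ℚ => (1 - 2 * q) / (2 - 3 * q)) (fareyB2Left m) := by
  refine ⟨⟨fun q hq => fareyAux_maps hq, (fareyAux_anti m).injOn, fun y hy => ?_⟩, fareyAux_anti m⟩
  exact ⟨_, fareyAux_maps hy, fareyAux_invol hy⟩
end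

section
/- Let $m$ be a positive integer. The map sending a fraction $h/k$ to $h/(3h-k)$ (i.e., sending a rational $q$ to $q/(3q-1)$) is an order-reversing bijection from the right halfsequence $\mathcal{F}^{\ge 1/2}(\mathbb{B}(2m),m)$ onto itself. -/
/-- The right halfsequence `𝓕^{≥1/2}(𝔹(2m), m)`. -/
def fareyB2Right (m : ℕ) : Set ℚ := {q ∈ fareyB2 m | 1 / 2 ≤ q}

private lemma invol_aux (q : ℚ) (h : 1/2 ≤ q) :
    (q / (3 * q - 1)) / (3 * (q / (3 * q - 1)) - 1) = q := by
  have h1 : (0:ℚ) < 3 * q - 1 := by linarith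
  have h2 : 3 * (q / (3 * q - 1)) - 1 = 1 / (3 * q - 1) := by
    field_simp
    ring
  rw [h2]
  field_simp
  exact div_self (ne_of_gt (by linarith))

private lemma mapsTo_aux (m : ℕ) : ∀ q ∈ fareyB2Right m,
    q / (3 * q - 1) ∈ fareyB2Right m := by
  rintro q ⟨⟨h0, h1, hden, hnum, hdiff⟩, hhalf⟩
  set n := q.num with hn
  set d := (q.den : ℤ) with hd
  have hdpos : (0:ℤ) < d := by rw [hd]; exact_mod_cast q.pos
  have hdQ : (0:ℚ) < (d:ℚ) := by exact_mod_cast hdpos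
  have hq : (n:ℚ) / (d:ℚ) = q := by
    rw [hn, hd]; push_cast; exact q.num_div_den
  -- basic integer facts
  have hd2n : d ≤ 2 * n := by
    have : (d:ℚ) ≤ 2 * (n:ℚ) := by
      rw [← hq, div_le_div_iff₀ (by norm_num) hdQ] at hhalf
      linarith
    exact_mod_cast this
  have hnd : n ≤ d := by
    have : (n:ℚ) ≤ (d:ℚ) := by
      rw [← hq, div_le_one hdQ] at h1
      exact h1
    exact_mod_cast this
  have hnpos : 0 < n := by omega
  set e : ℤ := 3 * n - d with he
  have hepos : 0 < e := by omega
  have h3q : (0:ℚ) < 3 * q - 1 := by linarith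
  have hfe : q / (3 * q - 1) = (n:ℚ) / (e:ℚ) := by
    rw [← hq]
    have heQ : ((e:ℚ)) ≠ 0 := by exact_mod_cast hepos.ne'
    have h3 : 3 * ((n:ℚ)/(d:ℚ)) - 1 ≠ 0 := by rw [hq]; exact h3q.ne'
    rw [show ((e:ℚ)) = 3*(n:ℚ)-(d:ℚ) by rw [he]; push_cast; ring]
    field_simp
  have hcop : Nat.Coprime n.natAbs e.natAbs := by
    have h1 : IsCoprime n d := Int.isCoprime_iff_gcd_eq_one.mpr q.reduced
    have h2 : IsCoprime n (-d + n * 3) := (h1.neg_right).add_mul_left_right 3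
    have h3 : IsCoprime n e := by
      convert h2 using 2; omega
    exact Int.isCoprime_iff_gcd_eq_one.mp h3
  have hnum' : (q / (3 * q - 1)).num = n := by
    rw [hfe]; exact Rat.num_div_eq_of_coprime hepos hcop
  have hden' : (((q / (3 * q - 1)).den : ℤ)) = e := by
    rw [hfe]; exact Rat.den_div_eq_of_coprime hepos hcop
  have hnm : n ≤ (m:ℤ) := hnum
  refine ⟨⟨?_, ?_, ?_, ?_, ?_⟩, ?_⟩
  · positivity
  · rw [div_le_one h3q]; linarith
  · have : ((q / (3 * q - 1)).den : ℤ) ≤ 2 * (m:ℤ) := by rw [hden']; omega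
    exact_mod_cast this
  · rw [hnum']; omega
  · rw [hnum', hden']; omega
  · rw [div_le_div_iff₀ (by norm_num) h3q]; linarith

/-- The map `q ↦ q/(3q-1)` (i.e. `h/k ↦ h/(3h-k)`) is an order-reversing
bijection from `𝓕^{≥1/2}(𝔹(2m), m)` onto itself. -/
theorem fareyB2Right_self_bijection (m : ℕ) (hm : 0 < m) :
    Set.BijOn (fun q : ℚ => q / (3 * q - 1)) (fareyB2Right m) (fareyB2Right m) ∧
    StrictAntiOn (fun q : ℚ => q / (3 * q - 1)) (fareyB2Right m) := by
  have hanti : StrictAntiOn (fun q : ℚ => q / (3 * q - 1)) (fareyB2Right m) := by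
    intro x hx y hy hxy
    have hx2 : (1:ℚ)/2 ≤ x := hx.2
    have hy2 : (1:ℚ)/2 ≤ y := hy.2
    have px : (0:ℚ) < 3 * x - 1 := by linarith
    have py : (0:ℚ) < 3 * y - 1 := by linarith
    simp only
    rw [div_lt_div_iff₀ py px]
    nlinarith
  refine ⟨⟨fun q hq => mapsTo_aux m q hq, hanti.injOn, ?_⟩, hanti⟩
  intro y hy
  refine ⟨y / (3 * y - 1), mapsTo_aux m y hy, ?_⟩
  exact invol_aux y hy.2
end

section
/- Let $m$ be a positive integer. The map sending a fraction $h/k$ to $(k-h)/(2k-3h)$ (i.e., sending a rational $q$ to $(1-q)/(2-3q)$) is an order-preserving bijection from the left halfsequence $\mathcal{F}^{\le 1/2}(\mathbb{B}(2m),m)$ onto the right halfsequence $\mathcal{F}^{\ge 1/2}(\mathbb{B}(2m),m)$. -/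
/-- The map `q ↦ (1-q)/(2-3q)` (i.e. `h/k ↦ (k-h)/(2k-3h)`) is an
order-preserving bijection from `𝓕^{≤1/2}(𝔹(2m), m)` onto `𝓕^{≥1/2}(𝔹(2m), m)`. -/
theorem fareyB2Left_to_right_bijection (m : ℕ) (hm : 0 < m) :
    Set.BijOn (fun q : ℚ => (1 - q) / (2 - 3 * q)) (fareyB2Left m) (fareyB2Right m) ∧
    StrictMonoOn (fun q : ℚ => (1 - q) / (2 - 3 * q)) (fareyB2Left m) := by
  have key : StrictMonoOn (fun q : ℚ => (1 - q) / (2 - 3 * q)) (fareyB2Left m) := by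
    intro x hx y hy hxy
    have hx2 : x ≤ 1/2 := hx.2
    have hy2 : y ≤ 1/2 := hy.2
    have h1 : (0:ℚ) < 2 - 3*x := by linarith
    have h2 : (0:ℚ) < 2 - 3*y := by linarith
    simp only
    rw [div_lt_div_iff₀ h1 h2]
    nlinarith
  refine ⟨⟨?_, key.injOn, ?_⟩, key⟩
  · -- MapsTo
    rintro q ⟨⟨hq0, hq1, hden, hnum, hdn⟩, hhalf⟩
    set h : ℤ := q.num with hh
    set k : ℤ := (q.den : ℤ) with hk
    have hkpos : 0 < k := Int.natCast_pos.mpr q.pos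
    have hqeq : q = (h:ℚ)/(k:ℚ) := (Rat.num_div_den q).symm
    have h0 : 0 ≤ h := Rat.num_nonneg.mpr hq0
    have hkQ : (0:ℚ) < (k:ℚ) := by exact_mod_cast hkpos
    have h2k : 2*h ≤ k := by
      rw [hqeq, div_le_div_iff₀ hkQ (by norm_num : (0:ℚ) < 2)] at hhalf
      have : (h*2 : ℤ) ≤ 1*k := by exact_mod_cast hhalf
      omega
    have hdpos : 0 < 2*k - 3*h := by omega
    have hdQ : (0:ℚ) < ((2*k - 3*h : ℤ):ℚ) := by exact_mod_cast hdpos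
    have hcop : IsCoprime h k := by
      rw [Int.isCoprime_iff_gcd_eq_one]
      simpa [Int.gcd, hh, hk] using q.reduced
    obtain ⟨u, v, huv⟩ := hcop
    have hcop' : IsCoprime (k - h) (2*k - 3*h) :=
      ⟨2*u + 3*v, -u - v, by linear_combination huv⟩
    have hcopN : Nat.Coprime (k - h).natAbs (2*k - 3*h).natAbs :=
      Int.isCoprime_iff_gcd_eq_one.mp hcop'
    have hq3 : (0:ℚ) < 2 - 3*q := by linarith
    have himg : (1 - q)/(2 - 3*q) = ((k - h : ℤ):ℚ)/((2*k - 3*h : ℤ):ℚ) := by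
      rw [hqeq]
      rw [div_eq_div_iff (by rw [hqeq] at hq3; linarith) (ne_of_gt hdQ)]
      push_cast
      field_simp
    have hnum' : ((1 - q)/(2 - 3*q) : ℚ).num = k - h := by
      rw [himg]; exact Rat.num_div_eq_of_coprime hdpos hcopN
    have hden' : (((1 - q)/(2 - 3*q) : ℚ).den : ℤ) = 2*k - 3*h := by
      rw [himg]; exact Rat.den_div_eq_of_coprime hdpos hcopN
    show (1 - q) / (2 - 3 * q) ∈ fareyB2Right m
    refine ⟨⟨?_, ?_, ?_, ?_, ?_⟩, ?_⟩
    · rw [himg]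
      apply div_nonneg _ hdQ.le
      exact_mod_cast (by omega : (0:ℤ) ≤ k - h)
    · rw [himg, div_le_one hdQ]
      exact_mod_cast (by omega : (k - h : ℤ) ≤ 2*k - 3*h)
    · have hd2m : (2*k - 3*h : ℤ) ≤ 2*m := by omega
      omega
    · omega
    · omega
    · rw [himg, div_le_div_iff₀ (by norm_num : (0:ℚ) < 2) hdQ]
      exact_mod_cast (by omega : (1:ℤ)*(2*k - 3*h) ≤ (k - h)*2)
  · -- SurjOn
    rintro p ⟨⟨hp0, hp1, hden, hnum, hdn⟩, hhalf⟩
    set a : ℤ := p.num with ha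
    set b : ℤ := (p.den : ℤ) with hb
    have hbpos : 0 < b := Int.natCast_pos.mpr p.pos
    have hbQ : (0:ℚ) < (b:ℚ) := by exact_mod_cast hbpos
    have hpeq : p = (a:ℚ)/(b:ℚ) := (Rat.num_div_den p).symm
    have ha0 : 0 ≤ a := Rat.num_nonneg.mpr hp0
    have hab : a ≤ b := by
      rw [hpeq, div_le_one hbQ] at hp1
      exact_mod_cast hp1
    have h2a : b ≤ 2*a := by
      rw [hpeq, div_le_div_iff₀ (by norm_num : (0:ℚ) < 2) hbQ] at hhalf
      have : (1*b : ℤ) ≤ a*2 := by exact_mod_cast hhalf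
      omega
    have hdpos : 0 < 3*a - b := by omega
    have hdQ : (0:ℚ) < ((3*a - b : ℤ):ℚ) := by exact_mod_cast hdpos
    have hcop : IsCoprime a b := by
      rw [Int.isCoprime_iff_gcd_eq_one]
      simpa [Int.gcd, ha, hb] using p.reduced
    obtain ⟨u, v, huv⟩ := hcop
    have hcop' : IsCoprime (2*a - b) (3*a - b) :=
      ⟨-u - 3*v, u + 2*v, by linear_combination huv⟩
    have hcopN : Nat.Coprime (2*a - b).natAbs (3*a - b).natAbs :=
      Int.isCoprime_iff_gcd_eq_one.mp hcop'
    refine ⟨((2*a - b : ℤ):ℚ)/((3*a - b : ℤ):ℚ), ?_, ?_⟩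
    · have hnum' : (((2*a - b : ℤ):ℚ)/((3*a - b : ℤ):ℚ)).num = 2*a - b :=
        Rat.num_div_eq_of_coprime hdpos hcopN
      have hden' : ((((2*a - b : ℤ):ℚ)/((3*a - b : ℤ):ℚ)).den : ℤ) = 3*a - b :=
        Rat.den_div_eq_of_coprime hdpos hcopN
      refine ⟨⟨?_, ?_, ?_, ?_, ?_⟩, ?_⟩
      · apply div_nonneg _ hdQ.le
        exact_mod_cast (by omega : (0:ℤ) ≤ 2*a - b)
      · rw [div_le_one hdQ]
        exact_mod_cast (by omega : (2*a - b : ℤ) ≤ 3*a - b)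
      · omega
      · omega
      · omega
      · rw [div_le_div_iff₀ hdQ (by norm_num : (0:ℚ) < 2)]
        exact_mod_cast (by omega : ((2*a - b)*2 : ℤ) ≤ 1*(3*a - b))
    · show (1 - ((2*a - b : ℤ):ℚ)/((3*a - b : ℤ):ℚ)) / (2 - 3 * (((2*a - b : ℤ):ℚ)/((3*a - b : ℤ):ℚ))) = p
      have hq12 : ((2*a - b : ℤ):ℚ)/((3*a - b : ℤ):ℚ) ≤ 1/2 := by
        rw [div_le_div_iff₀ hdQ (by norm_num : (0:ℚ) < 2)]
        exact_mod_cast (by omega : ((2*a - b)*2 : ℤ) ≤ 1*(3*a - b))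
      have hpos2 : (0:ℚ) < 2 - 3 * (((2*a - b : ℤ):ℚ)/((3*a - b : ℤ):ℚ)) := by linarith
      have hne : ((3*a - b : ℤ):ℚ) ≠ 0 := ne_of_gt hdQ
      rw [hpeq, div_eq_div_iff (ne_of_gt hpos2) (ne_of_gt hbQ)]
      push_cast at hne ⊢
      field_simp [show ((a:ℚ) * 3 - (b:ℚ)) ≠ 0 by rwa [mul_comm]]
      ring
end

section
/- Let $m$ be a positive integer. The map sending a fraction $h/k$ to $(2h-k)/(3h-k)$ (i.e., sending a rational $q$ to $(2q-1)/(3q-1)$) is an order-preserving bijection from the right halfsequence $\mathcal{F}^{\ge 1/2}(\mathbb{B}(2m),m)$ onto the left halfsequence $\mathcal{F}^{\le 1/2}(\mathbb{B}(2m),m)$. -/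
private lemma coprime_natAbs_of_isCoprime {a b : ℤ} (h : IsCoprime a b) :
    Nat.Coprime a.natAbs b.natAbs := by
  rwa [Int.isCoprime_iff_gcd_eq_one] at h

private lemma isCoprime_num_den' (q : ℚ) : IsCoprime q.num (q.den : ℤ) := by
  rw [Int.isCoprime_iff_gcd_eq_one]
  exact q.reduced

private lemma cop_right {h k : ℤ} (hc : IsCoprime h k) :
    IsCoprime (2 * h - k) (3 * h - k) := by
  obtain ⟨u, v, huv⟩ := hc
  exact ⟨-u - 3 * v, u + 2 * v, by linear_combination huv⟩

private lemma cop_left {a b : ℤ} (hc : IsCoprime a b) :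
    IsCoprime (b - a) (2 * b - 3 * a) := by
  obtain ⟨u, v, huv⟩ := hc
  exact ⟨2 * u + 3 * v, -u - v, by linear_combination huv⟩

private lemma numden_div {a b : ℤ} (hb : 0 < b) (hc : IsCoprime a b) :
    ((a : ℚ) / (b : ℚ)).num = a ∧ (((a : ℚ) / (b : ℚ)).den : ℤ) = b := by
  refine ⟨Rat.num_div_eq_of_coprime hb (coprime_natAbs_of_isCoprime hc), ?_⟩
  exact_mod_cast Rat.den_div_eq_of_coprime hb (coprime_natAbs_of_isCoprime hc)

private lemma img_eq (h k : ℤ) (hk : ((k : ℤ) : ℚ) ≠ 0)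
    (h3 : 3 * ((h : ℚ) / (k : ℚ)) - 1 ≠ 0) (hd : ((3 * h - k : ℤ) : ℚ) ≠ 0) :
    (2 * ((h : ℚ) / (k : ℚ)) - 1) / (3 * ((h : ℚ) / (k : ℚ)) - 1)
      = ((2 * h - k : ℤ) : ℚ) / ((3 * h - k : ℤ) : ℚ) := by
  have hk' : (k : ℚ) ≠ 0 := by exact_mod_cast hk
  rw [div_eq_div_iff h3 hd]
  push_cast
  field_simp

private lemma inv_eq (a b : ℤ) (hb : ((b : ℤ) : ℚ) ≠ 0)
    (hD : ((2 * b - 3 * a : ℤ) : ℚ) ≠ 0)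
    (h3 : 3 * (((b - a : ℤ) : ℚ) / ((2 * b - 3 * a : ℤ) : ℚ)) - 1 ≠ 0) :
    (2 * (((b - a : ℤ) : ℚ) / ((2 * b - 3 * a : ℤ) : ℚ)) - 1)
      / (3 * (((b - a : ℤ) : ℚ) / ((2 * b - 3 * a : ℤ) : ℚ)) - 1) = (a : ℚ) / (b : ℚ) := by
  have hD' : 2 * (b : ℚ) - 3 * (a : ℚ) ≠ 0 := by
    intro hc; apply hD; push_cast; linarith
  rw [div_eq_div_iff h3 hb]
  push_cast
  linear_combination (div_mul_cancel₀ ((b : ℚ) - (a : ℚ)) hD')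

private lemma key {m : ℕ} {q : ℚ} (hq : q ∈ fareyB2Right m) :
    ((2 * q - 1) / (3 * q - 1)).num = 2 * q.num - (q.den : ℤ) ∧
    ((((2 * q - 1) / (3 * q - 1)).den : ℤ) = 3 * q.num - (q.den : ℤ)) ∧
    (2 * q - 1) / (3 * q - 1) ∈ fareyB2Left m := by
  obtain ⟨⟨h0, h1, hd, hn, hdn⟩, hhalf⟩ := hq
  have hkpos : (0 : ℤ) < (q.den : ℤ) := Int.natCast_pos.2 q.pos
  have hkQ : (0 : ℚ) < ((q.den : ℤ) : ℚ) := by exact_mod_cast hkpos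
  -- integer inequalities
  have hk2h : (q.den : ℤ) ≤ 2 * q.num := by
    have hq' : (1 : ℚ) / 2 ≤ (q.num : ℚ) / ((q.den : ℤ) : ℚ) := by
      rw [show ((q.den : ℤ) : ℚ) = (q.den : ℚ) by push_cast; ring, Rat.num_div_den]
      exact hhalf
    rw [div_le_div_iff₀ (by norm_num) hkQ] at hq'
    have : 1 * (q.den : ℤ) ≤ q.num * 2 := by exact_mod_cast hq'
    omega
  have hhk : q.num ≤ (q.den : ℤ) := by
    have hq' : (q.num : ℚ) / ((q.den : ℤ) : ℚ) ≤ 1 := by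
      rw [show ((q.den : ℤ) : ℚ) = (q.den : ℚ) by push_cast; ring, Rat.num_div_den]
      exact h1
    rw [div_le_one hkQ] at hq'
    exact_mod_cast hq'
  have hden : (0 : ℤ) < 3 * q.num - (q.den : ℤ) := by omega
  have hdQ : (0 : ℚ) < ((3 * q.num - (q.den : ℤ) : ℤ) : ℚ) := by exact_mod_cast hden
  have h3q : (0 : ℚ) < 3 * q - 1 := by linarith [hhalf]
  have hqeq : q = (q.num : ℚ) / ((q.den : ℤ) : ℚ) := by
    rw [show ((q.den : ℤ) : ℚ) = (q.den : ℚ) by push_cast; ring]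
    exact (Rat.num_div_den q).symm
  have h3q' : 3 * ((q.num : ℚ) / ((q.den : ℤ) : ℚ)) - 1 ≠ 0 := by
    rw [← hqeq]; exact ne_of_gt h3q
  have himg := img_eq q.num (q.den : ℤ) (ne_of_gt hkQ) h3q' (ne_of_gt hdQ)
  rw [← hqeq] at himg
  have hcop := cop_right (isCoprime_num_den' q)
  obtain ⟨hnum, hden'⟩ := numden_div hden hcop
  rw [himg]
  have hle2 : ((2 * q.num - (q.den : ℤ) : ℤ) : ℚ) / ((3 * q.num - (q.den : ℤ) : ℤ) : ℚ)
      ≤ 1 / 2 := by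
    rw [div_le_div_iff₀ hdQ (by norm_num)]
    exact_mod_cast (show (2 * q.num - (q.den : ℤ)) * 2 ≤ 1 * (3 * q.num - (q.den : ℤ)) by omega)
  refine ⟨hnum, hden', ⟨?_, le_trans hle2 (by norm_num), ?_, ?_, ?_⟩, hle2⟩
  · rw [← Rat.num_nonneg, hnum]; omega
  · have : (((((2 * q.num - (q.den : ℤ) : ℤ) : ℚ)
        / ((3 * q.num - (q.den : ℤ) : ℤ) : ℚ)).den : ℤ)) ≤ 2 * m := by rw [hden']; omega
    exact_mod_cast this
  · rw [hnum]; omega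
  · rw [hnum, hden']; omega

/-- The map `q ↦ (2q-1)/(3q-1)` (i.e. `h/k ↦ (2h-k)/(3h-k)`) is an
order-preserving bijection from `𝓕^{≥1/2}(𝔹(2m), m)` onto `𝓕^{≤1/2}(𝔹(2m), m)`. -/
theorem fareyB2Right_to_left_bijection (m : ℕ) (hm : 0 < m) :
    Set.BijOn (fun q : ℚ => (2 * q - 1) / (3 * q - 1)) (fareyB2Right m) (fareyB2Left m) ∧
    StrictMonoOn (fun q : ℚ => (2 * q - 1) / (3 * q - 1)) (fareyB2Right m) := by

  have mono : StrictMonoOn (fun q : ℚ => (2 * q - 1) / (3 * q - 1)) (fareyB2Right m) := by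
    intro a ha b hb hab
    have ha2 : (1:ℚ)/2 ≤ a := ha.2
    have hb2 : (1:ℚ)/2 ≤ b := hb.2
    have h3a : (0:ℚ) < 3 * a - 1 := by linarith
    have h3b : (0:ℚ) < 3 * b - 1 := by linarith
    simp only
    rw [div_lt_div_iff₀ h3a h3b]
    nlinarith
  refine ⟨⟨fun q hq => (key hq).2.2, mono.injOn, ?_⟩, mono⟩
  intro p hp
  obtain ⟨⟨h0, h1, hd, hn, hdn⟩, hhalf⟩ := hp
  have hbpos : (0 : ℤ) < (p.den : ℤ) := Int.natCast_pos.2 p.pos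
  have hbQ : (0 : ℚ) < ((p.den : ℤ) : ℚ) := by exact_mod_cast hbpos
  have ha0 : 0 ≤ p.num := Rat.num_nonneg.2 h0
  have h2ab : 2 * p.num ≤ (p.den : ℤ) := by
    have hp' : (p.num : ℚ) / ((p.den : ℤ) : ℚ) ≤ 1 / 2 := by
      rw [show ((p.den : ℤ) : ℚ) = (p.den : ℚ) by push_cast; ring, Rat.num_div_den]
      exact hhalf
    rw [div_le_div_iff₀ hbQ (by norm_num)] at hp'
    have : p.num * 2 ≤ 1 * (p.den : ℤ) := by exact_mod_cast hp'
    omega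
  have hDpos : (0 : ℤ) < 2 * (p.den : ℤ) - 3 * p.num := by omega
  have hDQ : (0 : ℚ) < ((2 * (p.den : ℤ) - 3 * p.num : ℤ) : ℚ) := by exact_mod_cast hDpos
  have hcop := cop_left (isCoprime_num_den' p)
  obtain ⟨hnum, hden⟩ := numden_div hDpos hcop
  set g : ℚ := (((p.den : ℤ) - p.num : ℤ) : ℚ) / ((2 * (p.den : ℤ) - 3 * p.num : ℤ) : ℚ)
    with hg
  have hghalf : (1 : ℚ) / 2 ≤ g := by
    rw [hg, div_le_div_iff₀ (by norm_num) hDQ]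
    exact_mod_cast (show 1 * (2 * (p.den : ℤ) - 3 * p.num) ≤ ((p.den : ℤ) - p.num) * 2 by omega)
  have hgmem : g ∈ fareyB2Right m := by
    refine ⟨⟨?_, ?_, ?_, ?_, ?_⟩, hghalf⟩
    · rw [← Rat.num_nonneg, hg, hnum]; omega
    · rw [hg, div_le_one hDQ]
      exact_mod_cast (show ((p.den : ℤ) - p.num) ≤ 2 * (p.den : ℤ) - 3 * p.num by omega)
    · have : ((g.den : ℤ)) ≤ 2 * m := by rw [hg, hden]; omega
      exact_mod_cast this
    · rw [hg, hnum]; omega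
    · rw [hg, hnum, hden]; omega
  refine ⟨g, hgmem, ?_⟩
  have h3g : (0:ℚ) < 3 * g - 1 := by linarith [hghalf]
  have hpeq : p = (p.num : ℚ) / ((p.den : ℤ) : ℚ) := by
    rw [show ((p.den : ℤ) : ℚ) = (p.den : ℚ) by push_cast; ring]
    exact (Rat.num_div_den p).symm
  have := inv_eq p.num (p.den : ℤ) (ne_of_gt hbQ) (ne_of_gt hDQ) (by
    rw [← hg]; exact ne_of_gt h3g)
  rw [← hg, ← hpeq] at this
  exact this
end

section
/- Let $m > 1$ be an integer, and let $t$ denote the number of fractions $f \in \mathcal{F}(\mathbb{B}(2m),m)$ with $f < 1/3$ (i.e., the index of $1/3$ in the increasing enumeration of $\mathcal{F}(\mathbb{B}(2m),m)$ starting from index $0$). Then the number of fractions $f \in \mathcal{F}(\mathbb{B}(2m),m)$ with $f < 1/2$ equals $2t$, the number with $f < 2/3$ equals $3t$, and the total number $|\mathcal{F}(\mathbb{B}(2m),m)| - 1$ of fractions $f < 1/1$ equals $4t$; in particular, $|\mathcal{F}(\mathbb{B}(2m),m)| - 1$ is divisible by four. -/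
private lemma rat_lt_div {q : ℚ} {a b : ℤ} (hb : 0 < b) :
    q < (a:ℚ)/(b:ℚ) ↔ q.num * b < a * q.den := by
  have hd : (0:ℚ) < (q.den : ℚ) := by exact_mod_cast q.pos
  have hb' : (0:ℚ) < (b : ℚ) := by exact_mod_cast hb
  have h1 : ((q.num:ℚ)/(q.den:ℚ) < (a:ℚ)/(b:ℚ)) ↔ q.num * b < a * q.den := by
    rw [div_lt_div_iff₀ hd hb']; exact_mod_cast Iff.rfl
  rwa [Rat.num_div_den] at h1

private lemma div_lt_rat {q : ℚ} {a b : ℤ} (hb : 0 < b) :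
    (a:ℚ)/(b:ℚ) < q ↔ a * q.den < q.num * b := by
  have hd : (0:ℚ) < (q.den : ℚ) := by exact_mod_cast q.pos
  have hb' : (0:ℚ) < (b : ℚ) := by exact_mod_cast hb
  have h1 : ((a:ℚ)/(b:ℚ) < (q.num:ℚ)/(q.den:ℚ)) ↔ a * q.den < q.num * b := by
    rw [div_lt_div_iff₀ hb' hd]; exact_mod_cast Iff.rfl
  rwa [Rat.num_div_den] at h1

private lemma lt_third_iff (q : ℚ) : q < 1/3 ↔ 3 * q.num < (q.den:ℤ) := by
  have h := rat_lt_div (q := q) (a := 1) (b := 3) (by norm_num)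
  have h2 : (((1:ℤ):ℚ)/((3:ℤ):ℚ)) = 1/3 := by norm_num
  rw [h2] at h; rw [h]; omega

private lemma third_lt_iff (q : ℚ) : 1/3 < q ↔ (q.den:ℤ) < 3 * q.num := by
  have h := div_lt_rat (q := q) (a := 1) (b := 3) (by norm_num)
  have h2 : (((1:ℤ):ℚ)/((3:ℤ):ℚ)) = 1/3 := by norm_num
  rw [h2] at h; rw [h]; omega

private lemma lt_half_iff (q : ℚ) : q < 1/2 ↔ 2 * q.num < (q.den:ℤ) := by
  have h := rat_lt_div (q := q) (a := 1) (b := 2) (by norm_num)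
  have h2 : (((1:ℤ):ℚ)/((2:ℤ):ℚ)) = 1/2 := by norm_num
  rw [h2] at h; rw [h]; omega

private lemma phi_invol (q : ℚ) (h : q ≠ 2/3) :
    (1-2*((1-2*q)/(2-3*q)))/(2-3*((1-2*q)/(2-3*q))) = q := by
  have h2 : 2-3*q ≠ 0 := fun hc => h (by linarith [hc.symm.le, hc.le])
  have e1 : 2 - 3*((1-2*q)/(2-3*q)) = 1/(2-3*q) := by field_simp; ring
  have e2 : 1 - 2*((1-2*q)/(2-3*q)) = q/(2-3*q) := by
    have hc : (1-2*q)/(2-3*q)*(2-3*q) = 1-2*q := div_mul_cancel₀ _ h2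
    rw [eq_div_iff h2]; linear_combination (-2) * hc
  rw [e1, e2]; field_simp; exact mul_div_cancel_right₀ q (by intro hc; apply h2; linarith)

private lemma fareyB2_finite (m : ℕ) : (fareyB2 m).Finite := by
  have h : fareyB2 m ⊆ (fun p : ℤ × ℕ => (p.1:ℚ)/(p.2:ℚ)) ''
      (Set.Icc (0:ℤ) (2*m) ×ˢ Set.Icc 1 (2*m)) := by
    rintro q ⟨h0, h1, hden, hnum, hsub⟩
    refine ⟨(q.num, q.den), ⟨⟨Rat.num_nonneg.mpr h0, ?_⟩, ⟨q.pos, hden⟩⟩, Rat.num_div_den q⟩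
    have : (q.den : ℤ) ≤ 2*m := by exact_mod_cast hden
    omega
  exact (((Set.finite_Icc _ _).prod (Set.finite_Icc _ _)).image _).subset h

private lemma div_sub_formula (n d : ℤ) (hd : ((d:ℤ):ℚ) ≠ 0) (hb : ((2*d - 3*n : ℤ):ℚ) ≠ 0) :
    (1-2*((n:ℚ)/((d:ℤ):ℚ)))/(2-3*((n:ℚ)/((d:ℤ):ℚ))) = ((d - 2*n : ℤ):ℚ)/((2*d-3*n : ℤ):ℚ) := by
  push_cast at *
  have h2 : (2:ℚ) - 3*((n:ℚ)/(d:ℚ)) ≠ 0 := by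
    intro hc
    apply hb
    field_simp at hc ⊢
    linarith [hc]
  field_simp

private lemma phi_mem {m : ℕ} (hm : 1 < m) {q : ℚ} (hq : q ∈ fareyB2 m)
    (h0 : 0 < q) (hhalf : q < 1/2) (hne : q ≠ 1/3) :
    (1-2*q)/(2-3*q) ∈ fareyB2 m ∧ 0 < (1-2*q)/(2-3*q) ∧ (1-2*q)/(2-3*q) < 1/2 ∧
    (q < 1/3 ↔ 1/3 < (1-2*q)/(2-3*q)) := by
  obtain ⟨hq0, hq1, hqden, hqnum, hqsub⟩ := hq
  have hd : (0:ℤ) < (q.den:ℤ) := by exact_mod_cast q.pos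
  have hnpos : 0 < q.num := Rat.num_pos.mpr h0
  have h2n : 2 * q.num < (q.den:ℤ) := (lt_half_iff q).mp hhalf
  have h3ne : 3 * q.num ≠ (q.den:ℤ) := by
    intro hc
    have h1 : ¬ q < 1/3 := fun h => by have := (lt_third_iff q).mp h; omega
    have h2 : ¬ 1/3 < q := fun h => by have := (third_lt_iff q).mp h; omega
    exact hne (le_antisymm (not_lt.mp h2) (not_lt.mp h1))
  have hb : (0:ℤ) < 2*(q.den:ℤ) - 3*q.num := by omega
  have hbQ : (2:ℚ) - 3*q ≠ 0 := by intro hc; linarith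
  have hrew : (1-2*q)/(2-3*q) =
      (((q.den:ℤ) - 2*q.num : ℤ):ℚ) / ((2*(q.den:ℤ) - 3*q.num : ℤ):ℚ) := by
    have hd0 : ((q.den:ℤ):ℚ) ≠ 0 := by positivity
    have hb0 : ((2*(q.den:ℤ) - 3*q.num : ℤ):ℚ) ≠ 0 := by exact_mod_cast hb.ne'
    have key := div_sub_formula q.num (q.den:ℤ) hd0 hb0
    rw [show ((q.num:ℚ)/((q.den:ℤ):ℚ)) = q from by push_cast; exact Rat.num_div_den q] at key
    exact key
  have hcopQ : IsCoprime q.num ((q.den:ℤ)) := Int.isCoprime_iff_gcd_eq_one.mpr q.reduced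
  have hcop : IsCoprime ((q.den:ℤ) - 2*q.num) (2*(q.den:ℤ) - 3*q.num) := by
    obtain ⟨a, b, hab⟩ := hcopQ
    exact ⟨-2*a - 3*b, a + 2*b, by linear_combination hab⟩
  have hcop' : Nat.Coprime ((q.den:ℤ) - 2*q.num).natAbs (2*(q.den:ℤ) - 3*q.num).natAbs :=
    Int.isCoprime_iff_gcd_eq_one.mp hcop
  have hnum : ((1-2*q)/(2-3*q)).num = (q.den:ℤ) - 2*q.num := by
    rw [hrew]; exact Rat.num_div_eq_of_coprime hb hcop'
  have hden : (((1-2*q)/(2-3*q)).den : ℤ) = 2*(q.den:ℤ) - 3*q.num := by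
    rw [hrew]; exact Rat.den_div_eq_of_coprime hb hcop'
  have hr0 : 0 < (1-2*q)/(2-3*q) := Rat.num_pos.mp (by rw [hnum]; omega)
  have hrhalf : (1-2*q)/(2-3*q) < 1/2 := (lt_half_iff _).mpr (by rw [hnum, hden]; omega)
  refine ⟨⟨le_of_lt hr0, le_trans hrhalf.le (by norm_num), ?_, ?_, ?_⟩, hr0, hrhalf, ?_⟩
  · have : ((((1-2*q)/(2-3*q)).den) : ℤ) ≤ 2*m := by rw [hden]; omega
    exact_mod_cast this
  · rw [hnum]; omega
  · rw [hnum, hden]; omega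
  · rw [lt_third_iff, third_lt_iff, hnum, hden]; omega

private lemma one_sub_formula (n d : ℤ) (hd : ((d:ℤ):ℚ) ≠ 0) :
    1 - ((n:ℚ)/((d:ℤ):ℚ)) = ((d - n : ℤ):ℚ)/((d:ℤ):ℚ) := by
  field_simp; exact (Int.cast_sub d n).symm

private lemma psi_num_den (q : ℚ) :
    (1-q).num = (q.den:ℤ) - q.num ∧ ((1-q).den:ℤ) = (q.den:ℤ) := by
  have hd : (0:ℤ) < (q.den:ℤ) := by exact_mod_cast q.pos
  have hd0 : ((q.den:ℤ):ℚ) ≠ 0 := by positivity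
  have key := one_sub_formula q.num (q.den:ℤ) hd0
  rw [show ((q.num:ℚ)/((q.den:ℤ):ℚ)) = q from by push_cast; exact Rat.num_div_den q] at key
  have hcop : IsCoprime ((q.den:ℤ) - q.num) ((q.den:ℤ)) := by
    obtain ⟨a, b, hab⟩ := (Int.isCoprime_iff_gcd_eq_one.mpr q.reduced :
      IsCoprime q.num ((q.den:ℤ)))
    exact ⟨-a, a + b, by linear_combination hab⟩
  have hcop' := Int.isCoprime_iff_gcd_eq_one.mp hcop
  exact ⟨key ▸ Rat.num_div_eq_of_coprime hd hcop', key ▸ Rat.den_div_eq_of_coprime hd hcop'⟩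

private lemma psi_mem {m : ℕ} {q : ℚ} (hq : q ∈ fareyB2 m) : 1 - q ∈ fareyB2 m := by
  obtain ⟨hq0, hq1, hqden, hqnum, hqsub⟩ := hq
  obtain ⟨hnum, hden⟩ := psi_num_den q
  have hn0 : 0 ≤ q.num := Rat.num_nonneg.mpr hq0
  refine ⟨by linarith, by linarith, ?_, ?_, ?_⟩
  · have : ((1-q).den:ℤ) ≤ 2*m := by rw [hden]; exact_mod_cast hqden
    exact_mod_cast this
  · rw [hnum]; omega
  · rw [hnum, hden]; omega


/-- With `t` the number of fractions of `𝓕(𝔹(2m), m)` below `1/3`, the numbers of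
fractions below `1/2`, `2/3` and `1/1` are `2t`, `3t` and `4t`, respectively;
in particular `|𝓕(𝔹(2m), m)| - 1` is divisible by four. -/
theorem fareyB2_quarter_indices (m : ℕ) (hm : 1 < m) :
    {f ∈ fareyB2 m | f < 1 / 2}.ncard = 2 * {f ∈ fareyB2 m | f < 1 / 3}.ncard ∧
    {f ∈ fareyB2 m | f < 2 / 3}.ncard = 3 * {f ∈ fareyB2 m | f < 1 / 3}.ncard ∧
    (fareyB2 m).ncard - 1 = 4 * {f ∈ fareyB2 m | f < 1 / 3}.ncard ∧
    4 ∣ ((fareyB2 m).ncard - 1) := by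
  have hFfin := fareyB2_finite m
  -- special points
  have h0 : (0:ℚ) ∈ fareyB2 m := by
    refine ⟨le_refl _, by norm_num, ?_, ?_, ?_⟩ <;> simp <;> omega
  have h13 : (1/3:ℚ) ∈ fareyB2 m := by
    have hn : (1/3:ℚ).num = 1 := by norm_num
    have hd : (1/3:ℚ).den = 3 := by norm_num
    refine ⟨by norm_num, by norm_num, ?_, ?_, ?_⟩ <;> simp only [hn, hd] <;> push_cast <;> omega
  have h12 : (1/2:ℚ) ∈ fareyB2 m := by
    have hn : (1/2:ℚ).num = 1 := by norm_num
    have hd : (1/2:ℚ).den = 2 := by norm_num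
    refine ⟨by norm_num, by norm_num, ?_, ?_, ?_⟩ <;> simp only [hn, hd] <;> push_cast <;> omega
  have h23 : (2/3:ℚ) ∈ fareyB2 m := by
    have hn : (2/3:ℚ).num = 2 := by norm_num
    have hd : (2/3:ℚ).den = 3 := by norm_num
    refine ⟨by norm_num, by norm_num, ?_, ?_, ?_⟩ <;> simp only [hn, hd] <;> push_cast <;> omega
  have h1 : (1:ℚ) ∈ fareyB2 m := by
    have hn : (1:ℚ).num = 1 := by norm_num
    have hd : (1:ℚ).den = 1 := by norm_num
    refine ⟨by norm_num, by norm_num, ?_, ?_, ?_⟩ <;> simp only [hn, hd] <;> push_cast <;> omega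
  -- the four open-interval pieces
  set A := {f ∈ fareyB2 m | 0 < f ∧ f < 1/3} with hA
  set B := {f ∈ fareyB2 m | 1/3 < f ∧ f < 1/2} with hB
  set B2 := {f ∈ fareyB2 m | 1/2 < f ∧ f < 2/3} with hB2
  set A2 := {f ∈ fareyB2 m | 2/3 < f ∧ f < 1} with hA2
  have hAfin : A.Finite := hFfin.subset (Set.sep_subset _ _)
  have hBfin : B.Finite := hFfin.subset (Set.sep_subset _ _)
  have hB2fin : B2.Finite := hFfin.subset (Set.sep_subset _ _)
  have hA2fin : A2.Finite := hFfin.subset (Set.sep_subset _ _)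
  -- A ↔ B via φ
  have hABcard : A.ncard = B.ncard := by
    have himg : (fun q : ℚ => (1-2*q)/(2-3*q)) '' A = B := by
      ext y
      constructor
      · rintro ⟨x, ⟨hxF, hx0, hx13⟩, rfl⟩
        obtain ⟨hF', h0', hhalf', hiff⟩ :=
          phi_mem hm hxF hx0 (lt_trans hx13 (by norm_num)) (ne_of_lt hx13)
        exact ⟨hF', hiff.mp hx13, hhalf'⟩
      · rintro ⟨hyF, hy13, hy12⟩
        have hy0 : 0 < y := lt_trans (by norm_num) hy13
        obtain ⟨hF', h0', hhalf', hiff⟩ := phi_mem hm hyF hy0 hy12 (ne_of_gt hy13)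
        have hy23 : y ≠ 2/3 := by intro h; rw [h] at hy12; norm_num at hy12
        have hle : (1-2*y)/(2-3*y) ≤ 1/3 :=
          not_lt.mp (fun h => absurd (hiff.mpr h) (not_lt.mpr hy13.le))
        have hlt : (1-2*y)/(2-3*y) < 1/3 := by
          rcases lt_or_eq_of_le hle with h | h
          · exact h
          · exfalso
            have hinv := phi_invol y hy23
            rw [h] at hinv
            norm_num at hinv
            rw [← hinv] at hy13
            norm_num at hy13
        exact ⟨(1-2*y)/(2-3*y), ⟨hF', h0', hlt⟩, phi_invol y hy23⟩
    have hinj : Set.InjOn (fun q : ℚ => (1-2*q)/(2-3*q)) A := by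
      rintro x ⟨_, _, hx13⟩ y ⟨_, _, hy13⟩ hxy
      have hx23 : x ≠ 2/3 := by intro h; rw [h] at hx13; norm_num at hx13
      have hy23 : y ≠ 2/3 := by intro h; rw [h] at hy13; norm_num at hy13
      calc x = (1-2*((1-2*x)/(2-3*x)))/(2-3*((1-2*x)/(2-3*x))) := (phi_invol x hx23).symm
        _ = (1-2*((1-2*y)/(2-3*y)))/(2-3*((1-2*y)/(2-3*y))) := by rw [show (1-2*x)/(2-3*x) = (1-2*y)/(2-3*y) from hxy]
        _ = y := phi_invol y hy23
    rw [← himg, Set.ncard_image_of_injOn hinj]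
  -- A ↔ A2 and B ↔ B2 via ψ = 1 - ·
  have hpsi_inj : Set.InjOn (fun q : ℚ => 1 - q) (Set.univ : Set ℚ) := by
    rintro x _ y _ h; simpa using h
  have hAA2 : A.ncard = A2.ncard := by
    have himg : (fun q : ℚ => 1 - q) '' A = A2 := by
      ext y
      constructor
      · rintro ⟨x, ⟨hxF, hx0, hx13⟩, rfl⟩
        exact ⟨psi_mem hxF, by (try dsimp only); constructor <;> linarith⟩
      · rintro ⟨hyF, hy23, hy1⟩
        exact ⟨1 - y, ⟨psi_mem hyF, by (try dsimp only); constructor <;> linarith⟩, by ring⟩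
    rw [← himg, Set.ncard_image_of_injOn (hpsi_inj.mono (Set.subset_univ _))]
  have hBB2 : B.ncard = B2.ncard := by
    have himg : (fun q : ℚ => 1 - q) '' B = B2 := by
      ext y
      constructor
      · rintro ⟨x, ⟨hxF, hx13, hx12⟩, rfl⟩
        exact ⟨psi_mem hxF, by (try dsimp only); constructor <;> linarith⟩
      · rintro ⟨hyF, hy12, hy23⟩
        exact ⟨1 - y, ⟨psi_mem hyF, by (try dsimp only); constructor <;> linarith⟩, by ring⟩
    rw [← himg, Set.ncard_image_of_injOn (hpsi_inj.mono (Set.subset_univ _))]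
  -- decompositions
  have hS13 : {f ∈ fareyB2 m | f < 1/3} = insert (0:ℚ) A := by
    ext f
    constructor
    · rintro ⟨hF, hlt⟩
      rcases eq_or_lt_of_le hF.1 with h | h
      · exact Or.inl h.symm
      · exact Or.inr ⟨hF, h, hlt⟩
    · rintro (rfl | ⟨hF, h0f, hlt⟩)
      · exact ⟨h0, by norm_num⟩
      · exact ⟨hF, hlt⟩
  have h0nA : (0:ℚ) ∉ A := by rintro ⟨_, h, _⟩; exact lt_irrefl _ h
  have hcard13 : {f ∈ fareyB2 m | f < 1/3}.ncard = A.ncard + 1 := by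
    rw [hS13, Set.ncard_insert_of_notMem h0nA hAfin]
  have hS12 : {f ∈ fareyB2 m | f < 1/2} = insert (1/3:ℚ) ({f ∈ fareyB2 m | f < 1/3} ∪ B) := by
    ext f
    constructor
    · rintro ⟨hF, hlt⟩
      rcases lt_trichotomy f (1/3) with h | h | h
      · exact Or.inr (Or.inl ⟨hF, h⟩)
      · exact Or.inl h
      · exact Or.inr (Or.inr ⟨hF, h, hlt⟩)
    · rintro (rfl | ⟨hF, hlt⟩ | ⟨hF, _, hlt⟩)
      · exact ⟨h13, by norm_num⟩
      · exact ⟨hF, lt_trans hlt (by norm_num)⟩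
      · exact ⟨hF, hlt⟩
  have hd13B : Disjoint {f ∈ fareyB2 m | f < 1/3} B := by
    rw [Set.disjoint_left]
    rintro f ⟨_, h1⟩ ⟨_, h2, _⟩
    linarith
  have h13fin : {f ∈ fareyB2 m | f < 1/3}.Finite := hFfin.subset (Set.sep_subset _ _)
  have h12fin : {f ∈ fareyB2 m | f < 1/2}.Finite := hFfin.subset (Set.sep_subset _ _)
  have h23fin : {f ∈ fareyB2 m | f < 2/3}.Finite := hFfin.subset (Set.sep_subset _ _)
  have h13n : (1/3:ℚ) ∉ {f ∈ fareyB2 m | f < 1/3} ∪ B := by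
    rintro (⟨_, h⟩ | ⟨_, h, _⟩) <;> linarith
  have hcard12 : {f ∈ fareyB2 m | f < 1/2}.ncard = 2 * A.ncard + 2 := by
    rw [hS12, Set.ncard_insert_of_notMem h13n (h13fin.union hBfin),
      Set.ncard_union_eq hd13B h13fin hBfin, hcard13, ← hABcard]
    ring
  have hS23 : {f ∈ fareyB2 m | f < 2/3} = insert (1/2:ℚ) ({f ∈ fareyB2 m | f < 1/2} ∪ B2) := by
    ext f
    constructor
    · rintro ⟨hF, hlt⟩
      rcases lt_trichotomy f (1/2) with h | h | h
      · exact Or.inr (Or.inl ⟨hF, h⟩)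
      · exact Or.inl h
      · exact Or.inr (Or.inr ⟨hF, h, hlt⟩)
    · rintro (rfl | ⟨hF, hlt⟩ | ⟨hF, _, hlt⟩)
      · exact ⟨h12, by norm_num⟩
      · exact ⟨hF, lt_trans hlt (by norm_num)⟩
      · exact ⟨hF, hlt⟩
  have hd12B2 : Disjoint {f ∈ fareyB2 m | f < 1/2} B2 := by
    rw [Set.disjoint_left]
    rintro f ⟨_, h1⟩ ⟨_, h2, _⟩
    linarith
  have h12n : (1/2:ℚ) ∉ {f ∈ fareyB2 m | f < 1/2} ∪ B2 := by
    rintro (⟨_, h⟩ | ⟨_, h, _⟩) <;> linarith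
  have hcard23 : {f ∈ fareyB2 m | f < 2/3}.ncard = 3 * A.ncard + 3 := by
    rw [hS23, Set.ncard_insert_of_notMem h12n (h12fin.union hB2fin),
      Set.ncard_union_eq hd12B2 h12fin hB2fin, hcard12, ← hBB2, ← hABcard]
    ring
  have hSF : fareyB2 m = insert (1:ℚ) (insert (2/3:ℚ) ({f ∈ fareyB2 m | f < 2/3} ∪ A2)) := by
    ext f
    constructor
    · intro hF
      rcases eq_or_lt_of_le hF.2.1 with h | h
      · exact Or.inl h
      · rcases lt_trichotomy f (2/3) with h2 | h2 | h2
        · exact Or.inr (Or.inr (Or.inl ⟨hF, h2⟩))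
        · exact Or.inr (Or.inl h2)
        · exact Or.inr (Or.inr (Or.inr ⟨hF, h2, h⟩))
    · rintro (rfl | rfl | ⟨hF, _⟩ | ⟨hF, _, _⟩) <;> first | exact h1 | exact h23 | assumption
  have hd23A2 : Disjoint {f ∈ fareyB2 m | f < 2/3} A2 := by
    rw [Set.disjoint_left]
    rintro f ⟨_, h1⟩ ⟨_, h2, _⟩
    linarith
  have h23n : (2/3:ℚ) ∉ {f ∈ fareyB2 m | f < 2/3} ∪ A2 := by
    rintro (⟨_, h⟩ | ⟨_, h, _⟩) <;> linarith
  have h1n : (1:ℚ) ∉ insert (2/3:ℚ) ({f ∈ fareyB2 m | f < 2/3} ∪ A2) := by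
    rintro (h | ⟨_, h⟩ | ⟨_, _, h⟩)
    · norm_num at h
    · linarith
    · linarith
  have hcardF : (fareyB2 m).ncard = 4 * A.ncard + 5 := by
    rw [hSF, Set.ncard_insert_of_notMem h1n
        ((Set.Finite.union h23fin hA2fin).insert _),
      Set.ncard_insert_of_notMem h23n (h23fin.union hA2fin),
      Set.ncard_union_eq hd23A2 h23fin hA2fin, hcard23, ← hAA2]
    ring
  refine ⟨?_, ?_, ?_, ?_⟩
  · rw [hcard12, hcard13]; ring
  · rw [hcard23, hcard13]; ring
  · rw [hcardF, hcard13]; omega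
  · rw [hcardF]; exact ⟨A.ncard + 1, by omega⟩
end

section
/- Let $m > 1$ be an integer. The map sending a fraction $h/k$ to $h/(k+h)$ (i.e., sending a rational $q$ to $q/(1+q)$) is an order-preserving bijection from the Farey sequence $\mathcal{F}_m$ onto the left halfsequence $\mathcal{F}^{\le 1/2}(\mathbb{B}(2m),m)$. -/
lemma aux_numden (q : ℚ) (hq : 0 ≤ q) :
    (q / (1 + q)).num = q.num ∧ ((q / (1 + q)).den : ℤ) = (q.den : ℤ) + q.num := by
  have ha : 0 ≤ q.num := Rat.num_nonneg.mpr hq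
  have hb : (0 : ℤ) < (q.den : ℤ) + q.num := by have := q.pos; omega
  have hco : Nat.Coprime q.num.natAbs ((q.den : ℤ) + q.num).natAbs := by
    have h1 : ((q.den : ℤ) + q.num).natAbs = q.den + q.num.natAbs := by omega
    rw [h1, Nat.Coprime, Nat.gcd_add_self_right]
    exact q.reduced
  have hden : (q.den : ℚ) ≠ 0 := by exact_mod_cast q.pos.ne'
  have h1q : (1 : ℚ) + q ≠ 0 := by positivity
  have hmul : q * (q.den : ℚ) = q.num := Rat.mul_den_eq_num q
  have hbq : (((q.den : ℤ) + q.num : ℤ) : ℚ) ≠ 0 := by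
    exact_mod_cast hb.ne'
  have key : q / (1 + q) = (q.num : ℚ) / (((q.den : ℤ) + q.num : ℤ) : ℚ) := by
    rw [div_eq_div_iff h1q hbq]
    push_cast
    linear_combination hmul
  rw [key]
  exact ⟨Rat.num_div_eq_of_coprime hb hco, by
    rw [Rat.den_div_eq_of_coprime hb hco]⟩

lemma aux_numden' (r : ℚ) (hr0 : 0 ≤ r) (hrlt : r.num < (r.den : ℤ)) :
    (r / (1 - r)).num = r.num ∧ ((r / (1 - r)).den : ℤ) = (r.den : ℤ) - r.num := by
  have ha : 0 ≤ r.num := Rat.num_nonneg.mpr hr0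
  have hb : (0 : ℤ) < (r.den : ℤ) - r.num := by omega
  have hco : Nat.Coprime r.num.natAbs ((r.den : ℤ) - r.num).natAbs := by
    have h1 : ((r.den : ℤ) - r.num).natAbs = r.den - r.num.natAbs := by omega
    have h2 : r.den - r.num.natAbs + r.num.natAbs = r.den := by omega
    rw [h1, Nat.Coprime]
    have h3 := Nat.gcd_add_self_right r.num.natAbs (r.den - r.num.natAbs)
    rw [h2] at h3
    rw [← h3]; exact r.reduced
  have hden : (r.den : ℚ) ≠ 0 := by exact_mod_cast r.pos.ne'
  have hrl1 : r < 1 := by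
    rw [← Rat.num_div_den r, div_lt_one (by exact_mod_cast r.pos)]
    exact_mod_cast hrlt
  have h1r : (1 : ℚ) - r ≠ 0 := by linarith
  have hmul : r * (r.den : ℚ) = r.num := Rat.mul_den_eq_num r
  have hbq : (((r.den : ℤ) - r.num : ℤ) : ℚ) ≠ 0 := by exact_mod_cast hb.ne'
  have key : r / (1 - r) = (r.num : ℚ) / (((r.den : ℤ) - r.num : ℤ) : ℚ) := by
    rw [div_eq_div_iff h1r hbq]
    push_cast
    linear_combination hmul
  rw [key]
  exact ⟨Rat.num_div_eq_of_coprime hb hco, by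
    rw [Rat.den_div_eq_of_coprime hb hco]⟩

/-- The Farey sequence `𝓕_m`: rationals `q` with `0 ≤ q ≤ 1` whose reduced
denominator is at most `m`. -/
def fareySeq (m : ℕ) : Set ℚ := {q : ℚ | 0 ≤ q ∧ q ≤ 1 ∧ q.den ≤ m}

/-- The map `q ↦ q/(1+q)` (i.e. `h/k ↦ h/(k+h)`) is an order-preserving
bijection from `𝓕_m` onto `𝓕^{≤1/2}(𝔹(2m), m)`. -/
theorem fareySeq_to_fareyB2Left_bijection (m : ℕ) (hm : 1 < m) :
    Set.BijOn (fun q : ℚ => q / (1 + q)) (fareySeq m) (fareyB2Left m) ∧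
    StrictMonoOn (fun q : ℚ => q / (1 + q)) (fareySeq m) := by
  have hmono : StrictMonoOn (fun q : ℚ => q / (1 + q)) (fareySeq m) := by
    intro a ha b hb hab
    have ha0 : 0 ≤ a := ha.1
    have hb0 : 0 ≤ b := hb.1
    simp only
    rw [div_lt_div_iff₀ (by linarith) (by linarith)]
    nlinarith
  have hmaps : Set.MapsTo (fun q : ℚ => q / (1 + q)) (fareySeq m) (fareyB2Left m) := by
    intro q hq
    show q / (1 + q) ∈ fareyB2Left m
    obtain ⟨hq0, hq1, hqd⟩ := hq
    obtain ⟨hn, hd⟩ := aux_numden q hq0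
    have hnum0 : 0 ≤ q.num := Rat.num_nonneg.mpr hq0
    have hdpos : (0:ℚ) < q.den := by exact_mod_cast q.pos
    have hnumden : q.num ≤ (q.den : ℤ) := by
      have h1 : (q.num : ℚ) ≤ (q.den : ℚ) := by
        have := Rat.mul_den_eq_num q
        nlinarith
      exact_mod_cast h1
    have hdm : (q.den : ℤ) ≤ (m : ℤ) := by exact_mod_cast hqd
    have h1q : (0:ℚ) < 1 + q := by linarith
    have hhalf : q / (1 + q) ≤ 1 / 2 := by
      rw [div_le_div_iff₀ h1q (by norm_num)]
      linarith
    refine ⟨⟨div_nonneg hq0 h1q.le, le_trans hhalf (by norm_num), ?_, ?_, ?_⟩, hhalf⟩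
    · have : ((q / (1 + q)).den : ℤ) ≤ 2 * m := by omega
      exact_mod_cast this
    · omega
    · omega
  refine ⟨⟨hmaps, hmono.injOn, ?_⟩, hmono⟩
  intro r hr
  obtain ⟨⟨hr0, hr1, hrd2, hrn, hrdn⟩, hrhalf⟩ := hr
  have hnum0 : 0 ≤ r.num := Rat.num_nonneg.mpr hr0
  have hdpos : (0:ℚ) < r.den := by exact_mod_cast r.pos
  have h2nd : 2 * r.num ≤ (r.den : ℤ) := by
    have h1 : 2 * (r.num : ℚ) ≤ (r.den : ℚ) := by
      have := Rat.mul_den_eq_num r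
      nlinarith
    exact_mod_cast h1
  have hrlt : r.num < (r.den : ℤ) := by
    have := r.pos; omega
  obtain ⟨hn', hd'⟩ := aux_numden' r hr0 hrlt
  have hrl1 : r < 1 := by
    rw [← Rat.num_div_den r, div_lt_one hdpos]
    exact_mod_cast hrlt
  have h1r : (0:ℚ) < 1 - r := by linarith
  refine ⟨r / (1 - r), ⟨div_nonneg hr0 h1r.le, ?_, ?_⟩, ?_⟩
  · rw [div_le_one h1r]
    have h1 : r ≤ 1/2 := hrhalf
    linarith
  · have : ((r / (1 - r)).den : ℤ) ≤ (m : ℤ) := by omega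
    exact_mod_cast this
  · show r / (1 - r) / (1 + r / (1 - r)) = r
    have hq0 : (0:ℚ) ≤ r / (1 - r) := div_nonneg hr0 h1r.le
    have h2 : (0:ℚ) < 1 + r / (1 - r) := by linarith
    field_simp
    ring
end

section
/- Let $m > 1$ be an integer. The map sending a fraction $h/k$ to $(k-h)/h$ (i.e., sending a rational $q$ to $(1-q)/q$) is an order-reversing bijection from the right halfsequence $\mathcal{F}^{\ge 1/2}(\mathbb{B}(2m),m)$ onto the Farey sequence $\mathcal{F}_m$. -/
private lemma farey_num_le_den {q : ℚ} (h : q ≤ 1) : q.num ≤ (q.den : ℤ) := by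
  have hd : (0:ℚ) < (q.den : ℚ) := by exact_mod_cast q.pos
  rw [← Rat.num_div_den q, div_le_one hd] at h
  exact_mod_cast h

private lemma farey_coprime_sub (q : ℚ) :
    Nat.Coprime ((q.den : ℤ) - q.num).natAbs q.num.natAbs := by
  have h : IsCoprime ((q.den : ℤ) - q.num) q.num := by
    have h1 : IsCoprime (q.den : ℤ) q.num := by
      rw [Int.isCoprime_iff_gcd_eq_one]
      simpa [Int.gcd, Nat.coprime_comm] using q.reduced
    have := h1.add_mul_left_left (-1)
    simpa [mul_comm, sub_eq_add_neg] using this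
  rw [Int.isCoprime_iff_gcd_eq_one] at h
  exact h

/-- num and den of `(1-q)/q` for `0 < q ≤ 1`. -/
private lemma farey_num_den (q : ℚ) (hq0 : 0 < q) (hq1 : q ≤ 1) :
    ((1 - q) / q).num = (q.den : ℤ) - q.num ∧
      (((1 - q) / q).den : ℤ) = q.num := by
  have hn : 0 < q.num := Rat.num_pos.mpr hq0
  have heq : (1 - q) / q = (((q.den : ℤ) - q.num : ℤ) : ℚ) / ((q.num : ℤ) : ℚ) := by
    have key : q * ((q.den : ℕ) : ℚ) = ((q.num : ℤ) : ℚ) := by exact_mod_cast Rat.mul_den_eq_num q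
    have hn' : ((q.num : ℤ) : ℚ) ≠ 0 := by exact_mod_cast hn.ne'
    rw [div_eq_div_iff (by positivity : (0:ℚ) < q).ne' hn']
    push_cast at key ⊢
    nlinarith [key]
  refine ⟨?_, ?_⟩
  · rw [heq]; exact Rat.num_div_eq_of_coprime hn (farey_coprime_sub q)
  · rw [heq]; exact Rat.den_div_eq_of_coprime hn (farey_coprime_sub q)

/-- The map `q ↦ (1-q)/q` (i.e. `h/k ↦ (k-h)/h`) is an order-reversing
bijection from `𝓕^{≥1/2}(𝔹(2m), m)` onto `𝓕_m`. -/
theorem fareyB2Right_to_fareySeq_bijection (m : ℕ) (hm : 1 < m) :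
    Set.BijOn (fun q : ℚ => (1 - q) / q) (fareyB2Right m) (fareySeq m) ∧
    StrictAntiOn (fun q : ℚ => (1 - q) / q) (fareyB2Right m) := by
  have hanti : StrictAntiOn (fun q : ℚ => (1 - q) / q) (fareyB2Right m) := by
    intro x hx y hy hxy
    have hx0 : (0:ℚ) < x := lt_of_lt_of_le (by norm_num) hx.2
    have hy0 : (0:ℚ) < y := lt_of_lt_of_le (by norm_num) hy.2
    simp only
    rw [div_lt_div_iff₀ hy0 hx0]
    nlinarith
  refine ⟨⟨?_, hanti.injOn, ?_⟩, hanti⟩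
  · -- MapsTo
    intro q hq
    obtain ⟨⟨hq0, hq1, hden, hnum, hsub⟩, hhalf⟩ := hq
    have hq0' : (0:ℚ) < q := lt_of_lt_of_le (by norm_num) hhalf
    obtain ⟨hN, hD⟩ := farey_num_den q hq0' hq1
    have hn : 0 < q.num := Rat.num_pos.mpr hq0'
    have hnd : q.num ≤ (q.den : ℤ) := farey_num_le_den hq1
    have hd2 : (q.den : ℤ) ≤ 2 * q.num := by
      have hhalf' : (1:ℚ)/2 ≤ (q.num : ℚ) / (q.den : ℚ) := by
        rw [Rat.num_div_den q]; exact hhalf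
      have hd : (0:ℚ) < (q.den : ℚ) := by exact_mod_cast q.pos
      rw [div_le_div_iff₀ (by norm_num) hd] at hhalf'
      have h3 : 1 * (q.den : ℤ) ≤ q.num * 2 := by exact_mod_cast hhalf'
      omega
    refine ⟨?_, ?_, ?_⟩
    · show (0:ℚ) ≤ (1 - q) / q
      rw [← Rat.num_nonneg, hN]; omega
    · show (1 - q) / q ≤ 1
      rw [← Rat.num_div_den ((1-q)/q)]
      have hdpos : (0:ℚ) < (((1-q)/q).den : ℚ) := by exact_mod_cast ((1-q)/q).pos
      rw [div_le_one hdpos]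
      have : ((1-q)/q).num ≤ (((1-q)/q).den : ℤ) := by rw [hN, hD]; omega
      exact_mod_cast this
    · show ((1 - q) / q).den ≤ m
      have : (((1-q)/q).den : ℤ) ≤ (m : ℤ) := by rw [hD]; omega
      exact_mod_cast this
  · -- SurjOn
    intro r hr
    obtain ⟨hr0, hr1, hden⟩ := hr
    set a : ℤ := r.num with ha
    set b : ℤ := (r.den : ℤ) with hb
    have hb0 : 0 < b := by rw [hb]; exact_mod_cast r.pos
    have ha0 : 0 ≤ a := Rat.num_nonneg.mpr hr0
    have hab : a ≤ b := farey_num_le_den hr1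
    have hcop : Nat.Coprime b.natAbs (a + b).natAbs := by
      have h1 : IsCoprime b a := by
        rw [Int.isCoprime_iff_gcd_eq_one]
        simpa [ha, hb, Int.gcd, Nat.coprime_comm] using r.reduced
      have h2 : IsCoprime b (a + b) := by
        have := h1.add_mul_left_right 1
        simpa using this
      rw [Int.isCoprime_iff_gcd_eq_one] at h2
      exact h2
    have habpos : 0 < a + b := by omega
    set q : ℚ := (b : ℚ) / ((a + b : ℤ) : ℚ) with hqdef
    have hqnum : q.num = b := Rat.num_div_eq_of_coprime habpos hcop
    have hqden : (q.den : ℤ) = a + b := Rat.den_div_eq_of_coprime habpos hcop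
    have habQ : ((a + b : ℤ) : ℚ) ≠ 0 := by exact_mod_cast habpos.ne'
    have hbQ : ((b : ℤ) : ℚ) ≠ 0 := by exact_mod_cast hb0.ne'
    have hq0 : (0:ℚ) < q := by
      rw [hqdef]
      have h1 : (0:ℚ) < (b : ℚ) := by exact_mod_cast hb0
      have h2 : (0:ℚ) < ((a + b : ℤ) : ℚ) := by exact_mod_cast habpos
      positivity
    have hm' : (1:ℤ) ≤ m := by exact_mod_cast hm.le
    have hdm : a ≤ (m : ℤ) ∧ b ≤ (m : ℤ) := by
      have : (r.den : ℤ) ≤ (m : ℤ) := by exact_mod_cast hden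
      constructor <;> omega
    refine ⟨q, ⟨⟨hq0.le, ?_, ?_, ?_, ?_⟩, ?_⟩, ?_⟩
    · rw [← Rat.num_div_den q]
      have hdpos : (0:ℚ) < (q.den : ℚ) := by exact_mod_cast q.pos
      rw [div_le_one hdpos]
      have : q.num ≤ (q.den : ℤ) := by rw [hqnum, hqden]; omega
      exact_mod_cast this
    · have : (q.den : ℤ) ≤ 2 * (m : ℤ) := by rw [hqden]; omega
      exact_mod_cast this
    · rw [hqnum]; omega
    · rw [hqden, hqnum]; omega
    · rw [hqdef, div_le_div_iff₀ (by norm_num) (by exact_mod_cast habpos : (0:ℚ) < ((a + b : ℤ) : ℚ))]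
      push_cast
      have : (a : ℚ) ≤ b := by exact_mod_cast hab
      linarith
    · -- (1 - q)/q = r
      have hr' : r = (a : ℚ) / (b : ℚ) := by
        rw [ha, hb]; push_cast; exact (Rat.num_div_den r).symm
      show (1 - q) / q = r
      rw [hqdef, hr']
      field_simp
      push_cast; ring
end

section
/- Let $m > 1$ be an integer. Then $|\mathcal{F}(\mathbb{B}(2m),m)| - 1 = \sum_{d \ge 1} \mu(d) \cdot \lfloor m/d \rfloor \cdot (\lfloor m/d \rfloor + 1)$, where $\mu$ is the Möbius function (the sum may be taken over $1 \le d \le m$, since the terms with $d > m$ vanish). -/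
open Finset

/-- pairs (h,k): 1 ≤ h ≤ m, h ≤ k ≤ h+m, inside box -/
private def fbox (m : ℕ) : Finset (ℕ × ℕ) :=
  (Finset.Icc 1 m ×ˢ Finset.Icc 1 (2 * m)).filter (fun p => p.1 ≤ p.2 ∧ p.2 ≤ p.1 + m)

private lemma mem_fbox {m : ℕ} (hm : 1 ≤ m) {p : ℕ × ℕ} :
    p ∈ fbox m ↔ 1 ≤ p.1 ∧ p.1 ≤ m ∧ p.1 ≤ p.2 ∧ p.2 ≤ p.1 + m := by
  simp only [fbox, Finset.mem_filter, Finset.mem_product, Finset.mem_Icc]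
  constructor
  · rintro ⟨⟨⟨h1, h2⟩, h3, h4⟩, h5, h6⟩; exact ⟨h1, h2, h5, h6⟩
  · rintro ⟨h1, h2, h5, h6⟩
    exact ⟨⟨⟨h1, h2⟩, le_trans h1 h5, le_trans h6 (by omega)⟩, h5, h6⟩

private lemma card_fbox_dvd {m d : ℕ} (hm : 1 ≤ m) (hd : 1 ≤ d) :
    ((fbox m).filter (fun p => d ∣ p.1 ∧ d ∣ p.2)).card = (m / d) * (m / d + 1) := by
  have hd0 : 0 < d := hd
  have hcard : ((Finset.Icc 1 (m / d)) ×ˢ (Finset.Icc 0 (m / d))).card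
      = (m / d) * (m / d + 1) := by
    rw [Finset.card_product, Nat.card_Icc, Nat.card_Icc]; simp
  rw [← hcard]
  apply Finset.card_nbij' (i := fun p => (p.1 / d, (p.2 - p.1) / d))
    (j := fun q => (d * q.1, d * q.1 + d * q.2))
  · intro p hp
    rw [Finset.mem_coe, Finset.mem_filter, mem_fbox hm] at hp
    obtain ⟨⟨h1, h2, h3, h4⟩, h5, h6⟩ := hp
    simp only [Finset.mem_coe, Finset.mem_product, Finset.mem_Icc]
    refine ⟨⟨?_, Nat.div_le_div_right h2⟩, Nat.zero_le _, ?_⟩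
    · exact Nat.one_le_div_iff hd0 |>.2 (Nat.le_of_dvd (by omega) h5)
    · exact Nat.div_le_div_right (by omega)
  · intro q hq
    simp only [Finset.mem_coe, Finset.mem_product, Finset.mem_Icc] at hq
    obtain ⟨⟨h1, h2⟩, _, h4⟩ := hq
    have hda : d * q.1 ≤ m := le_trans (Nat.mul_le_mul_left d h2) (by rw [mul_comm]; exact Nat.div_mul_le_self m d)
    have hdb : d * q.2 ≤ m := le_trans (Nat.mul_le_mul_left d h4) (by rw [mul_comm]; exact Nat.div_mul_le_self m d)
    rw [Finset.mem_coe, Finset.mem_filter, mem_fbox hm]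
    dsimp only
    exact ⟨⟨by nlinarith, hda, by omega, by omega⟩, ⟨q.1, rfl⟩, Dvd.dvd.add ⟨q.1, rfl⟩ ⟨q.2, rfl⟩⟩
  · intro p hp
    rw [Finset.mem_coe, Finset.mem_filter, mem_fbox hm] at hp
    obtain ⟨⟨h1, h2, h3, h4⟩, h5, h6⟩ := hp
    have e1 : d * (p.1 / d) = p.1 := Nat.mul_div_cancel' h5
    have e2 : d * ((p.2 - p.1) / d) = p.2 - p.1 := Nat.mul_div_cancel' (Nat.dvd_sub h6 h5)
    simp only [e1, e2]
    ext <;> simp <;> omega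
  · intro q hq
    have e1 : d * q.1 / d = q.1 := Nat.mul_div_cancel_left _ hd0
    have e2 : (d * q.1 + d * q.2 - d * q.1) / d = q.2 := by
      rw [Nat.add_sub_cancel_left, Nat.mul_div_cancel_left _ hd0]
    show (d * q.1 / d, (d * q.1 + d * q.2 - d * q.1) / d) = q
    rw [e1, e2]

private def fcop (m : ℕ) : Finset (ℕ × ℕ) :=
  (fbox m).filter (fun p => Nat.Coprime p.1 p.2)

open ArithmeticFunction ArithmeticFunction.Moebius ArithmeticFunction.zeta in
private lemma sum_moebius_divisors (n : ℕ) :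
    ∑ i ∈ n.divisors, (μ i : ℤ) = if n = 1 then 1 else 0 := by
  have h : (μ * ζ : ArithmeticFunction ℤ) n = (1 : ArithmeticFunction ℤ) n := by
    rw [moebius_mul_coe_zeta]
  rw [coe_mul_zeta_apply, one_apply] at h
  exact h

open ArithmeticFunction ArithmeticFunction.Moebius in
private lemma card_fcop (m : ℕ) (hm : 1 ≤ m) :
    ((fcop m).card : ℤ) =
      ∑ d ∈ Finset.Icc 1 m, (μ d : ℤ) * ((m / d : ℕ) : ℤ) * (((m / d : ℕ) : ℤ) + 1) := by
  have key : ((fcop m).card : ℤ)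
      = ∑ p ∈ fbox m, ∑ d ∈ Finset.Icc 1 m, (if d ∣ p.1 ∧ d ∣ p.2 then (μ d : ℤ) else 0) := by
    rw [fcop, Finset.card_filter]
    push_cast
    refine Finset.sum_congr rfl fun p hp => ?_
    rw [mem_fbox hm] at hp
    obtain ⟨h1, h2, h3, h4⟩ := hp
    have hg0 : Nat.gcd p.1 p.2 ≠ 0 := by
      intro h; have := Nat.eq_zero_of_gcd_eq_zero_left h; omega
    have hdiv : (Finset.Icc 1 m).filter (fun d => d ∣ p.1 ∧ d ∣ p.2)
        = (Nat.gcd p.1 p.2).divisors := by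
      ext d
      simp only [Finset.mem_filter, Finset.mem_Icc, Nat.mem_divisors, Nat.dvd_gcd_iff]
      constructor
      · rintro ⟨_, h⟩; exact ⟨h, hg0⟩
      · rintro ⟨⟨ha, hb⟩, _⟩
        have hd1 : 1 ≤ d := Nat.pos_of_dvd_of_pos ha (by omega)
        exact ⟨⟨hd1, le_trans (Nat.le_of_dvd (by omega) ha) h2⟩, ha, hb⟩
    rw [← Finset.sum_filter, hdiv, sum_moebius_divisors]
  rw [key, Finset.sum_comm]
  refine Finset.sum_congr rfl fun d hd => ?_
  rw [Finset.mem_Icc] at hd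
  rw [← Finset.sum_filter, Finset.sum_const,
    card_fbox_dvd hm hd.1, nsmul_eq_mul]
  push_cast
  ring

private lemma num_den_div {h k : ℕ} (hk : 0 < k) (hc : Nat.Coprime h k) :
    ((h : ℚ) / (k : ℚ)).num = (h : ℤ) ∧ ((h : ℚ) / (k : ℚ)).den = k := by
  have hb0 : (0 : ℤ) < (k : ℤ) := by exact_mod_cast hk
  have hcop : Nat.Coprime (h : ℤ).natAbs (k : ℤ).natAbs := by simpa using hc
  have e : ((h : ℚ) / (k : ℚ)) = ((h : ℤ) : ℚ) / ((k : ℤ) : ℚ) := by push_cast; ring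
  constructor
  · rw [e]; exact Rat.num_div_eq_of_coprime hb0 hcop
  · rw [e]
    have := Rat.den_div_eq_of_coprime hb0 hcop
    omega

private lemma fareyB2_eq (m : ℕ) (hm : 1 ≤ m) :
    fareyB2 m = ↑(insert (0 : ℚ) ((fcop m).image (fun p => (p.1 : ℚ) / (p.2 : ℚ)))) := by
  ext q
  simp only [fareyB2, Set.mem_setOf_eq, Finset.coe_insert, Set.mem_insert_iff,
    Finset.coe_image, Set.mem_image, Finset.mem_coe]
  constructor
  · rintro ⟨h0, h1, h2, h3, h4⟩
    rcases eq_or_lt_of_le h0 with heq | hlt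
    · exact Or.inl heq.symm
    right
    have hnum : 0 < q.num := Rat.num_pos.2 hlt
    have hden : 0 < q.den := q.pos
    have hnum_le_den : q.num ≤ (q.den : ℤ) := by
      rw [← Rat.num_div_den q] at h1
      have h1' := (div_le_one (show (0:ℚ) < (q.den : ℚ) by exact_mod_cast hden)).1 h1
      exact_mod_cast h1'
    refine ⟨(q.num.natAbs, q.den), ?_, ?_⟩
    · rw [fcop, Finset.mem_filter, mem_fbox hm]
      have hna : (q.num.natAbs : ℤ) = q.num := Int.natAbs_of_nonneg (le_of_lt hnum)
      exact ⟨⟨by omega, by omega, by omega, by omega⟩, q.reduced⟩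
    · have hna : (q.num.natAbs : ℤ) = q.num := Int.natAbs_of_nonneg (le_of_lt hnum)
      have : ((q.num.natAbs : ℚ)) = (q.num : ℚ) := by
        have h' := congrArg (fun z : ℤ => (z : ℚ)) hna
        simp only [Int.cast_natCast] at h'; exact h'
      simp only [this]
      exact Rat.num_div_den q
  · rintro (rfl | ⟨p, hp, rfl⟩)
    · refine ⟨le_refl 0, zero_le_one, ?_, ?_, ?_⟩ <;> simp [Rat.den_ofNat] <;> omega
    · rw [fcop, Finset.mem_filter, mem_fbox hm] at hp
      obtain ⟨⟨h1, h2, h3, h4⟩, hc⟩ := hp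
      obtain ⟨hnum, hden⟩ := num_den_div (by omega : 0 < p.2) hc
      have hk0 : (0:ℚ) < (p.2 : ℚ) := by exact_mod_cast (by omega : 0 < p.2)
      refine ⟨by positivity, ?_, ?_, ?_, ?_⟩
      · rw [div_le_one hk0]; exact_mod_cast h3
      · rw [hden]; omega
      · rw [hnum]; exact_mod_cast h2
      · rw [hnum, hden]; push_cast; omega

open ArithmeticFunction ArithmeticFunction.Moebius in
/-- `|𝓕(𝔹(2m), m)| - 1 = ∑_{d ≥ 1} μ(d) ⌊m/d⌋ (⌊m/d⌋ + 1)`, the sum taken over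
`1 ≤ d ≤ m` since the terms with `d > m` vanish. -/
theorem fareyB2_card (m : ℕ) (hm : 1 < m) :
    ((fareyB2 m).ncard : ℤ) - 1 =
      ∑ d ∈ Finset.Icc 1 m, (μ d : ℤ) * ((m / d : ℕ) : ℤ) * (((m / d : ℕ) : ℤ) + 1) := by
  have hm1 : 1 ≤ m := le_of_lt hm
  rw [fareyB2_eq m hm1, Set.ncard_coe_finset]
  have hinj : Set.InjOn (fun p : ℕ × ℕ => (p.1 : ℚ) / (p.2 : ℚ)) (fcop m) := by
    intro p hp q hq he
    have he' : (p.1 : ℚ) / (p.2 : ℚ) = (q.1 : ℚ) / (q.2 : ℚ) := he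
    rw [Finset.mem_coe, fcop, Finset.mem_filter, mem_fbox hm1] at hp hq
    obtain ⟨⟨hp1, hp2, hp3, hp4⟩, hpc⟩ := hp
    obtain ⟨⟨hq1, hq2, hq3, hq4⟩, hqc⟩ := hq
    obtain ⟨hnum1, hden1⟩ := num_den_div (by omega : 0 < p.2) hpc
    obtain ⟨hnum2, hden2⟩ := num_den_div (by omega : 0 < q.2) hqc
    have e1 : (p.1 : ℤ) = (q.1 : ℤ) := by rw [← hnum1, ← hnum2, he']
    have e2 : p.2 = q.2 := by rw [← hden1, ← hden2, he']
    ext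
    · exact_mod_cast e1
    · exact e2
  have h0 : (0 : ℚ) ∉ (fcop m).image (fun p => (p.1 : ℚ) / (p.2 : ℚ)) := by
    rw [Finset.mem_image]
    rintro ⟨p, hp, he⟩
    rw [fcop, Finset.mem_filter, mem_fbox hm1] at hp
    obtain ⟨⟨h1, h2, h3, h4⟩, hc⟩ := hp
    have hk0 : (0:ℚ) < (p.2 : ℚ) := by exact_mod_cast (by omega : 0 < p.2)
    have hh0 : (0:ℚ) < (p.1 : ℚ) := by exact_mod_cast (by omega : 0 < p.1)
    have : (0:ℚ) < (p.1 : ℚ) / (p.2 : ℚ) := by positivity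
    rw [he] at this; exact lt_irrefl 0 this
  rw [Finset.card_insert_of_notMem h0, Finset.card_image_of_injOn hinj]
  push_cast
  rw [add_sub_cancel_right]
  exact card_fcop m hm1
end

section
/- Let $m > 1$ be an integer, and let $h/k \in \mathcal{F}(\mathbb{B}(2m),m)$ (in lowest terms) with $0/1 < h/k \le 1/2$. Let $x_0$ be the (unique) integer satisfying $h x_0 \equiv 1 \pmod{k-h}$ and $m - k + h + 1 \le x_0 \le m$. Then the fraction with numerator $(h x_0 - 1)/(k-h)$ and denominator $(k x_0 - 1)/(k-h)$ (both of which are integers) is the fraction immediately preceding $h/k$ in $\mathcal{F}(\mathbb{B}(2m),m)$, i.e., it is the largest element of $\mathcal{F}(\mathbb{B}(2m),m)$ that is strictly less than $h/k$. -/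
theorem Rat.two_mul_num_le_den_of_le_half {q : ℚ} (hq : q ≤ 1 / 2) : 2 * q.num ≤ q.den := by
  rw [← Rat.num_div_den q, div_le_div_iff₀ (by positivity) two_pos] at hq
  have : ((2 * q.num : ℤ) : ℚ) ≤ (q.den : ℤ) := by push_cast; linarith
  exact_mod_cast this

theorem sub_add_sub_le_sub_of_det_eq_one {a b h k c d : ℤ} (hdet : h * b - k * a = 1)
    (hab : a ≤ b) (hhk : h ≤ k) (hac : a * d < c * b) (hch : c * k < h * d) :
    b - a + (k - h) ≤ d - c := by
  have hdecomp : d - c = (b - a) * (h * d - k * c) + (k - h) * (b * c - a * d) := by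
    linear_combination (c - d) * hdet
  have hs : b - a ≤ (b - a) * (h * d - k * c) :=
    le_mul_of_one_le_right (by linarith) (by linarith)
  have ht : k - h ≤ (k - h) * (b * c - a * d) :=
    le_mul_of_one_le_right (by linarith) (by linarith)
  linarith

theorem det_eq_one_of_mul_eq {h k x a b : ℤ} (hn : k - h ≠ 0)
    (ha : h * x - 1 = (k - h) * a) (hb : k * x - 1 = (k - h) * b) :
    h * b - k * a = 1 ∧ b - a = x := by
  constructor
  · exact mul_left_cancel₀ hn (by linear_combination k * ha - h * hb)
  · exact mul_left_cancel₀ hn (by linear_combination ha - hb)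

theorem isGreatest_fareyB2_of_det_eq_one {m : ℕ} {q : ℚ} {a b : ℤ} (hq1 : q ≤ 1) (hb : 0 < b)
    (hdet : q.num * b - q.den * a = 1) (ha : 0 ≤ a) (hab : a ≤ b) (ham : a ≤ m)
    (hbam : b - a ≤ m) (hgap : m < b - a + (q.den - q.num)) :
    IsGreatest {f ∈ fareyB2 m | f < q} (a / b) := by
  have hcop : Nat.Coprime a.natAbs b.natAbs :=
    Int.isCoprime_iff_gcd_eq_one.mp ⟨-q.den, q.num, by linarith⟩
  have hnum : (a / b : ℚ).num = a := Rat.num_div_eq_of_coprime hb hcop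
  have hden : ((a / b : ℚ).den : ℤ) = b := Rat.den_div_eq_of_coprime hb hcop
  have hlt : (a / b : ℚ) < q := by
    rw [Rat.lt_iff _ _, hnum, hden]
    linarith
  refine ⟨⟨⟨by positivity, ?_, ?_, by rwa [hnum], by rwa [hnum, hden]⟩, hlt⟩, ?_⟩
  · exact div_le_one_of_le₀ (by exact_mod_cast hab) (by positivity)
  · zify; rw [hden]; linarith
  · rintro f ⟨⟨-, -, -, -, hfm⟩, hfq⟩
    by_contra! hf
    rw [Rat.lt_iff _ _, hnum, hden] at hf
    rw [Rat.lt_iff _ _] at hfq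
    have := sub_add_sub_le_sub_of_det_eq_one hdet hab (Rat.num_le_denom_iff.mpr hq1) hf hfq
    linarith

theorem fareyB2_pred_general (m : ℕ) (q : ℚ) (hq : q ∈ fareyB2 m)
    (hq0 : 0 < q) (hq2 : q ≤ 1 / 2) (x₀ : ℤ)
    (hmod : q.num * x₀ ≡ 1 [ZMOD ((q.den : ℤ) - q.num)])
    (hlo : (m : ℤ) - (q.den : ℤ) + q.num + 1 ≤ x₀) (hhi : x₀ ≤ (m : ℤ)) :
    ((q.den : ℤ) - q.num) ∣ (q.num * x₀ - 1) ∧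
    ((q.den : ℤ) - q.num) ∣ ((q.den : ℤ) * x₀ - 1) ∧
    IsGreatest {f ∈ fareyB2 m | f < q}
      (((q.num * x₀ - 1 : ℤ) : ℚ) / (((q.den : ℤ) * x₀ - 1 : ℤ) : ℚ)) := by
  obtain ⟨-, hq1, -, -, hkhm⟩ := hq
  have hh : 0 < q.num := Rat.num_pos.mpr hq0
  have h2h := Rat.two_mul_num_le_den_of_le_half hq2
  have hnum_dvd : ((q.den : ℤ) - q.num) ∣ q.num * x₀ - 1 := hmod.symm.dvd
  have hnum_den : q.num ≡ q.den [ZMOD (q.den : ℤ) - q.num] := Int.modEq_iff_dvd.mpr dvd_rfl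
  have hden_dvd : ((q.den : ℤ) - q.num) ∣ (q.den : ℤ) * x₀ - 1 :=
    ((hnum_den.symm.mul_right x₀).trans hmod).symm.dvd
  refine ⟨hnum_dvd, hden_dvd, ?_⟩
  obtain ⟨a, ha⟩ := hnum_dvd
  obtain ⟨b, hb⟩ := hden_dvd
  have hn : (q.den : ℤ) - q.num ≠ 0 := by linarith
  obtain ⟨hdet, hba⟩ := det_eq_one_of_mul_eq hn ha hb
  have ha0 : 0 ≤ a := by nlinarith
  -- `(k - h) a = h x₀ - 1 < h m ≤ (k - h) m`
  have ham : a ≤ m := by nlinarith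
  rw [ha, hb, Int.cast_mul, Int.cast_mul, mul_div_mul_left _ _ (by exact_mod_cast hn)]
  exact isGreatest_fareyB2_of_det_eq_one hq1 (by linarith) hdet ha0 (by linarith)
    ham (by linarith) (by linarith)

/-- Predecessor formula in `𝓕(𝔹(2m), m)`: for `0/1 < h/k ≤ 1/2` in the sequence and
`x₀` with `h·x₀ ≡ 1 (mod k-h)` and `m-k+h+1 ≤ x₀ ≤ m`, the numbers `(h·x₀-1)/(k-h)` and
`(k·x₀-1)/(k-h)` are integers, and the corresponding fraction is the fraction immediately
preceding `h/k`, i.e. the greatest element of `𝓕(𝔹(2m), m)` strictly below `h/k`. -/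
theorem fareyB2_pred (m : ℕ) (hm : 1 < m) (q : ℚ) (hq : q ∈ fareyB2 m)
    (hq0 : 0 < q) (hq2 : q ≤ 1 / 2) (x₀ : ℤ)
    (hmod : q.num * x₀ ≡ 1 [ZMOD ((q.den : ℤ) - q.num)])
    (hlo : (m : ℤ) - (q.den : ℤ) + q.num + 1 ≤ x₀) (hhi : x₀ ≤ (m : ℤ)) :
    ((q.den : ℤ) - q.num) ∣ (q.num * x₀ - 1) ∧
    ((q.den : ℤ) - q.num) ∣ ((q.den : ℤ) * x₀ - 1) ∧
    IsGreatest {f ∈ fareyB2 m | f < q}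
      (((q.num * x₀ - 1 : ℤ) : ℚ) / (((q.den : ℤ) * x₀ - 1 : ℤ) : ℚ)) :=
  fareyB2_pred_general m q hq hq0 hq2 x₀ hmod hlo hhi
end

section
/- Let $m > 1$ be an integer, and let $h/k \in \mathcal{F}(\mathbb{B}(2m),m)$ (in lowest terms) with $0/1 \le h/k < 1/2$. Let $x_0$ be the (unique) integer satisfying $h x_0 \equiv -1 \pmod{k-h}$ and $m - k + h + 1 \le x_0 \le m$. Then the fraction with numerator $(h x_0 + 1)/(k-h)$ and denominator $(k x_0 + 1)/(k-h)$ (both of which are integers) is the fraction immediately succeeding $h/k$ in $\mathcal{F}(\mathbb{B}(2m),m)$, i.e., it is the smallest element of $\mathcal{F}(\mathbb{B}(2m),m)$ that is strictly greater than $h/k$. -/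
theorem Rat.num_den_div_of_isCoprime {a b : ℤ} (hb : 0 < b) (hab : IsCoprime a b) :
    (a / b : ℚ).num = a ∧ ((a / b : ℚ).den : ℤ) = b :=
  have hab' : a.natAbs.Coprime b.natAbs := Int.isCoprime_iff_gcd_eq_one.mp hab
  ⟨Rat.num_div_eq_of_coprime hb hab', Rat.den_div_eq_of_coprime hb hab'⟩

theorem Rat.two_mul_num_lt_den_of_lt_half {q : ℚ} (hq : q < 1 / 2) : 2 * q.num < q.den := by
  have := (Rat.lt_iff q (1 / 2)).mp hq
  norm_num at this
  linarith

theorem mem_fareyB2_div {m : ℕ} {a b : ℤ} (hb : 0 < b) (hab : IsCoprime a b) (ha : 0 ≤ a)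
    (ham : a ≤ m) (hbam : b - a ≤ m) (hle : a ≤ b) : (a / b : ℚ) ∈ fareyB2 m := by
  obtain ⟨hnum, hden⟩ := Rat.num_den_div_of_isCoprime hb hab
  have hbQ : (0 : ℚ) < b := by exact_mod_cast hb
  refine ⟨by positivity, (div_le_one hbQ).mpr (by exact_mod_cast hle), ?_, ?_, ?_⟩
  · zify; omega
  · rwa [hnum]
  · rwa [hnum, hden]

theorem sub_add_sub_le_of_between {h k a b c e : ℤ} (hdet : k * a - h * b = 1)
    (hlt : h * e < c * k) (hgt : c * b < a * e) (hba : 0 ≤ b - a) (hkh : 0 ≤ k - h) :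
    (b - a) + (k - h) ≤ e - c := by
  have hsplit : e - c = (c * k - e * h) * (b - a) + (e * a - c * b) * (k - h) := by
    linear_combination (c - e) * hdet
  nlinarith

theorem isLeast_fareyB2_of_det_eq_one {m : ℕ} {q r : ℚ} (hq : q ≤ 1) (hr : r ∈ fareyB2 m)
    (hdet : q.den * r.num - q.num * r.den = 1)
    (hgap : (m : ℤ) < (r.den - r.num) + (q.den - q.num)) :
    IsLeast {f ∈ fareyB2 m | q < f} r := by
  refine ⟨⟨hr, (Rat.lt_iff q r).mpr (by linarith)⟩, ?_⟩
  rintro f ⟨hf, hqf⟩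
  by_contra! hfr
  have hfq := (Rat.lt_iff q f).mp hqf
  have hrf := (Rat.lt_iff f r).mp hfr
  have hq' := (Rat.le_iff q 1).mp hq
  have hr' := (Rat.le_iff r 1).mp hr.2.1
  simp only [Rat.num_ofNat, Rat.den_ofNat, Nat.cast_one, mul_one, one_mul] at hq' hr'
  have := sub_add_sub_le_of_between hdet hfq hrf (by linarith) (by linarith)
  linarith [hf.2.2.2.2]

theorem eq_sub_and_det_eq_one_of_mul_eq {h k x a b : ℤ} (hd : k - h ≠ 0)
    (ha : h * x + 1 = (k - h) * a) (hb : k * x + 1 = (k - h) * b) :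
    b - a = x ∧ k * a - h * b = 1 := by
  constructor
  · exact mul_left_cancel₀ hd (by linear_combination ha - hb)
  · exact mul_left_cancel₀ hd (by linear_combination h * hb - k * ha)

theorem fareyB2_succ_general (m : ℕ) (q : ℚ) (hq : q ∈ fareyB2 m)
    (hq2 : q < 1 / 2) (x₀ : ℤ)
    (hmod : q.num * x₀ ≡ -1 [ZMOD ((q.den : ℤ) - q.num)])
    (hlo : (m : ℤ) - (q.den : ℤ) + q.num + 1 ≤ x₀) (hhi : x₀ ≤ (m : ℤ)) :
    ((q.den : ℤ) - q.num) ∣ (q.num * x₀ + 1) ∧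
    ((q.den : ℤ) - q.num) ∣ ((q.den : ℤ) * x₀ + 1) ∧
    IsLeast {f ∈ fareyB2 m | q < f}
      (((q.num * x₀ + 1 : ℤ) : ℚ) / (((q.den : ℤ) * x₀ + 1 : ℤ) : ℚ)) := by
  obtain ⟨hq0, hq1, -, -, hdm⟩ := hq
  have h0 : 0 ≤ q.num := Rat.num_nonneg.mpr hq0
  have hhk := Rat.two_mul_num_lt_den_of_lt_half hq2
  have hdvd : (q.den - q.num : ℤ) ∣ q.num * x₀ + 1 := by simpa using hmod.symm.dvd
  have hdvd' : (q.den - q.num : ℤ) ∣ q.den * x₀ + 1 := by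
    rw [show (q.den : ℤ) * x₀ + 1 = q.num * x₀ + 1 + (q.den - q.num) * x₀ by ring]
    exact hdvd.add (dvd_mul_right _ x₀)
  refine ⟨hdvd, hdvd', ?_⟩
  obtain ⟨a, ha⟩ := hdvd
  obtain ⟨b, hb⟩ := hdvd'
  obtain ⟨hba, hdet⟩ := eq_sub_and_det_eq_one_of_mul_eq (by omega) ha hb
  have hd : ((q.den - q.num : ℤ) : ℚ) ≠ 0 := by exact_mod_cast (by omega : (q.den - q.num : ℤ) ≠ 0)
  have ha0 : 0 < a := by nlinarith
  -- `h < k - h` and `x₀ ≤ m` give `(k - h) a = h x₀ + 1 ≤ (k - h - 1) m + 1 ≤ (k - h) m`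
  have ham : a ≤ m := by nlinarith
  have hab : IsCoprime a b := ⟨q.den, -q.num, by linarith⟩
  obtain ⟨hnum, hden⟩ := Rat.num_den_div_of_isCoprime (by omega) hab
  rw [ha, hb, Int.cast_mul, Int.cast_mul, mul_div_mul_left _ _ hd]
  refine isLeast_fareyB2_of_det_eq_one hq1
    (mem_fareyB2_div (by omega) hab ha0.le ham (by omega) (by omega)) ?_ ?_
  · rw [hnum, hden, hdet]
  · rw [hnum, hden]; omega

/-- Successor formula in `𝓕(𝔹(2m), m)`: for `0/1 ≤ h/k < 1/2` in the sequence and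
`x₀` with `h·x₀ ≡ -1 (mod k-h)` and `m-k+h+1 ≤ x₀ ≤ m`, the numbers `(h·x₀+1)/(k-h)` and
`(k·x₀+1)/(k-h)` are integers, and the corresponding fraction is the fraction immediately
succeeding `h/k`, i.e. the least element of `𝓕(𝔹(2m), m)` strictly above `h/k`. -/
theorem fareyB2_succ (m : ℕ) (hm : 1 < m) (q : ℚ) (hq : q ∈ fareyB2 m)
    (hq0 : 0 ≤ q) (hq2 : q < 1 / 2) (x₀ : ℤ)
    (hmod : q.num * x₀ ≡ -1 [ZMOD ((q.den : ℤ) - q.num)])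
    (hlo : (m : ℤ) - (q.den : ℤ) + q.num + 1 ≤ x₀) (hhi : x₀ ≤ (m : ℤ)) :
    ((q.den : ℤ) - q.num) ∣ (q.num * x₀ + 1) ∧
    ((q.den : ℤ) - q.num) ∣ ((q.den : ℤ) * x₀ + 1) ∧
    IsLeast {f ∈ fareyB2 m | q < f}
      (((q.num * x₀ + 1 : ℤ) : ℚ) / (((q.den : ℤ) * x₀ + 1 : ℤ) : ℚ)) :=
  fareyB2_succ_general m q hq hq2 x₀ hmod hlo hhi
end

section
/- Let $m > 1$ be an integer. Then $\sum_{h/k} \sum_{s=1}^{\lfloor \min\{m/h,\,m/(k-h)\} \rfloor} \binom{m}{s h}\binom{m}{s(k-h)} = 2^{2m} - 2^{m+1} + 1$, where the outer sum ranges over all reduced fractions $h/k \in \mathcal{F}(\mathbb{B}(2m),m)$ with $0/1 < h/k < 1/1$. -/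
/-!
Writing `j = k - h`, the fractions `h/k` of the statement are the coprime pairs `(h, j)` in
`[1, m]²`, and `(h, j, s) ↦ (s h, s j)` is a bijection onto `[1, m]²` whose inverse divides a
pair by its gcd. The double sum therefore equals `∑_{a, b ∈ [1, m]} C(m, a) C(m, b) = (2^m - 1)²`.
-/

open Finset

theorem Nat.mem_Icc_one_min_div_iff {m h j s : ℕ} (hh : 0 < h) (hj : 0 < j) :
    s ∈ Icc 1 (min (m / h) (m / j)) ↔ 1 ≤ s ∧ s * h ≤ m ∧ s * j ≤ m := by
  rw [mem_Icc, le_min_iff, Nat.le_div_iff_mul_le hh, Nat.le_div_iff_mul_le hj]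

theorem sum_fareyB2_eq_sum_coprime {M : Type*} [AddCommMonoid M] (m : ℕ) (g : ℕ → ℕ → M) :
    ∑ p ∈ (Icc 1 (2 * m) ×ˢ Icc 1 (2 * m)).filter
        (fun p => p.1 < p.2 ∧ Nat.Coprime p.1 p.2 ∧ p.1 ≤ m ∧ p.2 - p.1 ≤ m), g p.1 (p.2 - p.1)
      = ∑ q ∈ (Icc 1 m ×ˢ Icc 1 m).filter (fun q => Nat.Coprime q.1 q.2), g q.1 q.2 := by
  refine sum_nbij' (fun p => (p.1, p.2 - p.1)) (fun q => (q.1, q.1 + q.2)) ?_ ?_ ?_ ?_ ?_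
  · rintro ⟨h, k⟩ hp
    simp only [mem_filter, mem_product, mem_Icc] at hp ⊢
    obtain ⟨⟨⟨hh1, -⟩, -⟩, hlt, hcop, hhm, hjm⟩ := hp
    exact ⟨⟨⟨hh1, hhm⟩, by omega, hjm⟩, (Nat.coprime_sub_self_right hlt.le).mpr hcop⟩
  · rintro ⟨h, j⟩ hq
    simp only [mem_filter, mem_product, mem_Icc] at hq ⊢
    obtain ⟨⟨⟨hh1, hhm⟩, hj1, hjm⟩, hcop⟩ := hq
    exact ⟨by omega, by omega, Nat.coprime_self_add_right.mpr hcop, hhm, by omega⟩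
  · rintro ⟨h, k⟩ hp
    exact Prod.ext rfl (Nat.add_sub_cancel' (mem_filter.mp hp).2.1.le)
  · rintro ⟨h, j⟩ -
    simp
  · intro p _
    rfl

theorem sum_coprime_sum_multiples_eq_sum {M : Type*} [AddCommMonoid M] (m : ℕ)
    (f : ℕ → ℕ → M) :
    ∑ q ∈ (Icc 1 m ×ˢ Icc 1 m).filter (fun q => Nat.Coprime q.1 q.2),
        ∑ s ∈ Icc 1 (min (m / q.1) (m / q.2)), f (s * q.1) (s * q.2)
      = ∑ q ∈ Icc 1 m ×ˢ Icc 1 m, f q.1 q.2 := by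
  rw [sum_sigma']
  refine sum_nbij' (fun x => (x.2 * x.1.1, x.2 * x.1.2))
    (fun q => ⟨(q.1 / q.1.gcd q.2, q.2 / q.1.gcd q.2), q.1.gcd q.2⟩) ?_ ?_ ?_ ?_ ?_
  · rintro ⟨⟨h, j⟩, s⟩ hx
    rw [mem_sigma, mem_filter, mem_product, mem_Icc, mem_Icc] at hx
    obtain ⟨⟨⟨⟨hh, -⟩, hj, -⟩, -⟩, hs⟩ := hx
    obtain ⟨hs1, hsh, hsj⟩ := (Nat.mem_Icc_one_min_div_iff hh hj).mp hs
    rw [mem_product, mem_Icc, mem_Icc]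
    exact ⟨⟨Nat.mul_pos hs1 hh, hsh⟩, Nat.mul_pos hs1 hj, hsj⟩
  · rintro ⟨a, b⟩ hq
    simp only [mem_product, mem_Icc] at hq
    obtain ⟨⟨ha1, ham⟩, hb1, hbm⟩ := hq
    have hg : 0 < a.gcd b := Nat.gcd_pos_of_pos_left _ ha1
    have ha : 0 < a / a.gcd b := Nat.div_pos (Nat.gcd_le_left _ ha1) hg
    have hb : 0 < b / a.gcd b := Nat.div_pos (Nat.gcd_le_right _ hb1) hg
    rw [mem_sigma, mem_filter, mem_product, mem_Icc, mem_Icc]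
    refine ⟨⟨⟨⟨ha, (Nat.div_le_self _ _).trans ham⟩, hb, (Nat.div_le_self _ _).trans hbm⟩,
      Nat.coprime_div_gcd_div_gcd hg⟩, (Nat.mem_Icc_one_min_div_iff ha hb).mpr ⟨hg, ?_, ?_⟩⟩
    · rwa [Nat.mul_div_cancel' (Nat.gcd_dvd_left a b)]
    · rwa [Nat.mul_div_cancel' (Nat.gcd_dvd_right a b)]
  · rintro ⟨⟨h, j⟩, s⟩ hx
    simp only [mem_sigma, mem_filter, mem_product, mem_Icc] at hx
    obtain ⟨⟨-, hcop⟩, hs, -⟩ := hx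
    have hgcd : (s * h).gcd (s * j) = s := by rw [Nat.gcd_mul_left, hcop, mul_one]
    simp only [hgcd, Nat.mul_div_cancel_left _ (zero_lt_one.trans_le hs)]
  · rintro ⟨a, b⟩ -
    exact Prod.ext (Nat.mul_div_cancel' (Nat.gcd_dvd_left a b))
      (Nat.mul_div_cancel' (Nat.gcd_dvd_right a b))
  · intro x _
    rfl

theorem Nat.sum_Icc_one_choose (m : ℕ) : ∑ a ∈ Icc 1 m, m.choose a = 2 ^ m - 1 := by
  have hrange : range (m + 1) = insert 0 (Icc 1 m) := by
    ext a
    simp only [mem_range, mem_insert, mem_Icc]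
    omega
  have h := Nat.sum_range_choose m
  rw [hrange, sum_insert (by simp), Nat.choose_zero_right] at h
  omega

theorem Nat.two_pow_sub_one_sq {m : ℕ} (hm : 1 ≤ m) :
    (2 ^ m - 1) ^ 2 = 2 ^ (2 * m) - 2 ^ (m + 1) + 1 := by
  have h1 : 1 ≤ 2 ^ m := Nat.one_le_two_pow
  have h2 : 2 ^ (m + 1) ≤ 2 ^ (2 * m) := Nat.pow_le_pow_right two_pos (by omega)
  zify [h1, h2]
  ring

/-- Identity for fractions of the Farey subsequence `𝓕(𝔹(2m), m)`.
The outer sum ranges over reduced fractions `h/k` with `0 < h/k < 1`,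
`k ≤ 2m`, `h ≤ m`, `k - h ≤ m`. -/
theorem fareyB2_binomial_identity (m : ℕ) (hm : 1 < m) :
    ∑ p ∈ (Finset.Icc 1 (2 * m) ×ˢ Finset.Icc 1 (2 * m)).filter
        (fun p => p.1 < p.2 ∧ Nat.Coprime p.1 p.2 ∧ p.1 ≤ m ∧ p.2 - p.1 ≤ m),
      ∑ s ∈ Finset.Icc 1 (min (m / p.1) (m / (p.2 - p.1))),
        (m.choose (s * p.1)) * (m.choose (s * (p.2 - p.1)))
      = 2 ^ (2 * m) - 2 ^ (m + 1) + 1 := by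
  calc _ = ∑ q ∈ (Icc 1 m ×ˢ Icc 1 m).filter (fun q => Nat.Coprime q.1 q.2),
          ∑ s ∈ Icc 1 (min (m / q.1) (m / q.2)), m.choose (s * q.1) * m.choose (s * q.2) :=
        sum_fareyB2_eq_sum_coprime m
          (fun h j => ∑ s ∈ Icc 1 (min (m / h) (m / j)), m.choose (s * h) * m.choose (s * j))
    _ = ∑ q ∈ Icc 1 m ×ˢ Icc 1 m, m.choose q.1 * m.choose q.2 :=
        sum_coprime_sum_multiples_eq_sum m (fun a b => m.choose a * m.choose b)
    _ = (∑ a ∈ Icc 1 m, m.choose a) ^ 2 := by rw [sum_product, ← sum_mul_sum, sq]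
    _ = 2 ^ (2 * m) - 2 ^ (m + 1) + 1 := by
        rw [Nat.sum_Icc_one_choose, Nat.two_pow_sub_one_sq hm.le]
end

section
/- Let $m > 1$ be an integer. Then $\sum_{h/k:\, 0/1 < h/k < 1/2} \sum_{s=1}^{\lfloor m/(k-h) \rfloor} \binom{m}{s h}\binom{m}{s(k-h)} = \sum_{h/k:\, 1/2 < h/k < 1/1} \sum_{s=1}^{\lfloor m/h \rfloor} \binom{m}{s h}\binom{m}{s(k-h)} = 2^{2m-1} - 2^m - \tfrac{1}{2}\binom{2m}{m} + 1$, where the outer sums range over all reduced fractions $h/k \in \mathcal{F}(\mathbb{B}(2m),m)$ in the indicated open intervals. -/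
open Finset

lemma aux1 (m : ℕ) (hm : 1 ≤ m) :
    (∑ p ∈ (Finset.Icc 1 (2 * m) ×ˢ Finset.Icc 1 (2 * m)).filter
        (fun p => 2 * p.1 < p.2 ∧ Nat.Coprime p.1 p.2 ∧ p.1 ≤ m ∧ p.2 - p.1 ≤ m),
      ∑ s ∈ Finset.Icc 1 (m / (p.2 - p.1)),
        (m.choose (s * p.1)) * (m.choose (s * (p.2 - p.1))))
    = ∑ q ∈ (Finset.Icc 1 m ×ˢ Finset.Icc 1 m).filter (fun q => q.1 < q.2),
        m.choose q.1 * m.choose q.2 := by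
  rw [Finset.sum_sigma']
  refine Finset.sum_nbij' (fun x => (x.2 * x.1.1, x.2 * (x.1.2 - x.1.1)))
    (fun q => ⟨(q.1 / Nat.gcd q.1 q.2, (q.1 + q.2) / Nat.gcd q.1 q.2), Nat.gcd q.1 q.2⟩)
    ?_ ?_ ?_ ?_ ?_
  · rintro ⟨⟨h, k⟩, s⟩ hx
    simp only [Finset.mem_sigma, Finset.mem_filter, Finset.mem_product, Finset.mem_Icc] at hx ⊢
    obtain ⟨⟨⟨⟨h1, h2m⟩, k1, k2m⟩, hlt, hcop, hhm, hbm⟩, hs1, hs2⟩ := hx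
    have hb1 : 1 ≤ k - h := by omega
    have hsb : s * (k - h) ≤ m := by
      rw [Nat.le_div_iff_mul_le (by omega)] at hs2; exact hs2
    have hsh1 : 1 ≤ s * h := Nat.one_le_iff_ne_zero.mpr (by positivity)
    have hshb : s * h < s * (k - h) :=
      mul_lt_mul_of_pos_left (show h < k - h by omega) (by omega)
    exact ⟨⟨⟨hsh1, by omega⟩, by omega, hsb⟩, hshb⟩
  · rintro ⟨x, y⟩ hq
    simp only [Finset.mem_filter, Finset.mem_product, Finset.mem_Icc] at hq
    obtain ⟨⟨⟨x1, xm⟩, y1, ym⟩, hxy⟩ := hq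
    have hg : 0 < Nat.gcd x y := Nat.gcd_pos_of_pos_left y (by omega)
    have hdx : Nat.gcd x y ∣ x := Nat.gcd_dvd_left x y
    have hdy : Nat.gcd x y ∣ y := Nat.gcd_dvd_right x y
    have hgx : Nat.gcd x y ≤ x := Nat.le_of_dvd (by omega) hdx
    have hgy : Nat.gcd x y ≤ y := Nat.le_of_dvd (by omega) hdy
    have hxg1 : 1 ≤ x / Nat.gcd x y := (Nat.one_le_div_iff hg).mpr hgx
    have hyg1 : 1 ≤ y / Nat.gcd x y := (Nat.one_le_div_iff hg).mpr hgy
    have hadd : (x + y) / Nat.gcd x y = x / Nat.gcd x y + y / Nat.gcd x y :=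
      Nat.add_div_of_dvd_right hdx
    have hxlt : x / Nat.gcd x y < y / Nat.gcd x y := Nat.div_lt_div_of_lt_of_dvd hdy hxy
    have hcop : Nat.Coprime (x / Nat.gcd x y) (y / Nat.gcd x y) := Nat.coprime_div_gcd_div_gcd hg
    simp only [Finset.mem_sigma, Finset.mem_filter, Finset.mem_product, Finset.mem_Icc]
    have hxx : x / Nat.gcd x y ≤ x := Nat.div_le_self x _
    have hyy : y / Nat.gcd x y ≤ y := Nat.div_le_self y _
    refine ⟨⟨⟨⟨by omega, by omega⟩, by omega, by omega⟩, by omega, ?_, by omega, by omega⟩,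
      by omega, ?_⟩
    · rw [hadd]
      simpa [Nat.coprime_self_add_right] using hcop
    · rw [hadd]
      have h2 : x / Nat.gcd x y + y / Nat.gcd x y - x / Nat.gcd x y = y / Nat.gcd x y := by omega
      rw [h2, Nat.le_div_iff_mul_le (by omega), Nat.mul_div_cancel' hdy]
      exact ym
  · rintro ⟨⟨h, k⟩, s⟩ hx
    simp only [Finset.mem_sigma, Finset.mem_filter, Finset.mem_product, Finset.mem_Icc] at hx
    obtain ⟨⟨⟨⟨h1, h2m⟩, k1, k2m⟩, hlt, hcop, hhm, hbm⟩, hs1, hs2⟩ := hx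
    have hcop' : Nat.Coprime h (k - h) := by
      have hk : k = h + (k - h) := by omega
      rw [hk, Nat.coprime_self_add_right] at hcop; exact hcop
    have hg : Nat.gcd (s * h) (s * (k - h)) = s := by
      rw [Nat.gcd_mul_left, hcop', mul_one]
    simp only [hg]
    have e1 : s * h / s = h := Nat.mul_div_cancel_left h (by omega)
    have e2 : (s * h + s * (k - h)) / s = k := by
      rw [← Nat.mul_add, Nat.mul_div_cancel_left _ (by omega)]; omega
    simp [e1, e2]
  · rintro ⟨x, y⟩ hq
    simp only [Finset.mem_filter, Finset.mem_product, Finset.mem_Icc] at hq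
    obtain ⟨⟨⟨x1, xm⟩, y1, ym⟩, hxy⟩ := hq
    have hg : 0 < Nat.gcd x y := Nat.gcd_pos_of_pos_left y (by omega)
    have hdx : Nat.gcd x y ∣ x := Nat.gcd_dvd_left x y
    have hdy : Nat.gcd x y ∣ y := Nat.gcd_dvd_right x y
    have hadd : (x + y) / Nat.gcd x y = x / Nat.gcd x y + y / Nat.gcd x y :=
      Nat.add_div_of_dvd_right hdx
    simp only [hadd, Nat.add_sub_cancel_left]
    simp [Nat.mul_div_cancel' hdx, Nat.mul_div_cancel' hdy]
  · rintro ⟨⟨h, k⟩, s⟩ hx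
    rfl

lemma aux2 (m : ℕ) (hm : 1 ≤ m) :
    (∑ p ∈ (Finset.Icc 1 (2 * m) ×ˢ Finset.Icc 1 (2 * m)).filter
        (fun p => p.2 < 2 * p.1 ∧ p.1 < p.2 ∧ Nat.Coprime p.1 p.2 ∧ p.1 ≤ m ∧ p.2 - p.1 ≤ m),
      ∑ s ∈ Finset.Icc 1 (m / p.1),
        (m.choose (s * p.1)) * (m.choose (s * (p.2 - p.1))))
    = ∑ q ∈ (Finset.Icc 1 m ×ˢ Finset.Icc 1 m).filter (fun q => q.2 < q.1),
        m.choose q.1 * m.choose q.2 := by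
  rw [Finset.sum_sigma']
  refine Finset.sum_nbij' (fun x => (x.2 * x.1.1, x.2 * (x.1.2 - x.1.1)))
    (fun q => ⟨(q.1 / Nat.gcd q.1 q.2, (q.1 + q.2) / Nat.gcd q.1 q.2), Nat.gcd q.1 q.2⟩)
    ?_ ?_ ?_ ?_ ?_
  · rintro ⟨⟨h, k⟩, s⟩ hx
    simp only [Finset.mem_sigma, Finset.mem_filter, Finset.mem_product, Finset.mem_Icc] at hx ⊢
    obtain ⟨⟨⟨⟨h1, h2m⟩, k1, k2m⟩, hlt, hlt2, hcop, hhm, hbm⟩, hs1, hs2⟩ := hx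
    have hsh : s * h ≤ m := by
      rw [Nat.le_div_iff_mul_le (by omega)] at hs2; exact hs2
    have hsb1 : 1 ≤ s * (k - h) := Nat.one_le_iff_ne_zero.mpr
      (Nat.mul_ne_zero (by omega) (by omega))
    have hshb : s * (k - h) < s * h :=
      mul_lt_mul_of_pos_left (show k - h < h by omega) (by omega)
    exact ⟨⟨⟨by omega, hsh⟩, hsb1, by omega⟩, hshb⟩
  · rintro ⟨x, y⟩ hq
    simp only [Finset.mem_filter, Finset.mem_product, Finset.mem_Icc] at hq
    obtain ⟨⟨⟨x1, xm⟩, y1, ym⟩, hxy⟩ := hq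
    have hg : 0 < Nat.gcd x y := Nat.gcd_pos_of_pos_left y (by omega)
    have hdx : Nat.gcd x y ∣ x := Nat.gcd_dvd_left x y
    have hdy : Nat.gcd x y ∣ y := Nat.gcd_dvd_right x y
    have hgx : Nat.gcd x y ≤ x := Nat.le_of_dvd (by omega) hdx
    have hgy : Nat.gcd x y ≤ y := Nat.le_of_dvd (by omega) hdy
    have hxg1 : 1 ≤ x / Nat.gcd x y := (Nat.one_le_div_iff hg).mpr hgx
    have hyg1 : 1 ≤ y / Nat.gcd x y := (Nat.one_le_div_iff hg).mpr hgy
    have hadd : (x + y) / Nat.gcd x y = x / Nat.gcd x y + y / Nat.gcd x y :=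
      Nat.add_div_of_dvd_right hdx
    have hxlt : y / Nat.gcd x y < x / Nat.gcd x y := Nat.div_lt_div_of_lt_of_dvd hdx hxy
    have hcop : Nat.Coprime (x / Nat.gcd x y) (y / Nat.gcd x y) := Nat.coprime_div_gcd_div_gcd hg
    simp only [Finset.mem_sigma, Finset.mem_filter, Finset.mem_product, Finset.mem_Icc]
    have hxx : x / Nat.gcd x y ≤ x := Nat.div_le_self x _
    have hyy : y / Nat.gcd x y ≤ y := Nat.div_le_self y _
    refine ⟨⟨⟨⟨by omega, by omega⟩, by omega, by omega⟩, by omega, by omega, ?_, by omega,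
      by omega⟩, by omega, ?_⟩
    · rw [hadd]
      simpa [Nat.coprime_self_add_right] using hcop
    · rw [Nat.le_div_iff_mul_le (by omega), Nat.mul_div_cancel' hdx]
      exact xm
  · rintro ⟨⟨h, k⟩, s⟩ hx
    simp only [Finset.mem_sigma, Finset.mem_filter, Finset.mem_product, Finset.mem_Icc] at hx
    obtain ⟨⟨⟨⟨h1, h2m⟩, k1, k2m⟩, hlt, hlt2, hcop, hhm, hbm⟩, hs1, hs2⟩ := hx
    have hcop' : Nat.Coprime h (k - h) := by
      have hk : k = h + (k - h) := by omega
      rw [hk, Nat.coprime_self_add_right] at hcop; exact hcop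
    have hg : Nat.gcd (s * h) (s * (k - h)) = s := by
      rw [Nat.gcd_mul_left, hcop', mul_one]
    simp only [hg]
    have e1 : s * h / s = h := Nat.mul_div_cancel_left h (by omega)
    have e2 : (s * h + s * (k - h)) / s = k := by
      rw [← Nat.mul_add, Nat.mul_div_cancel_left _ (by omega)]; omega
    simp [e1, e2]
  · rintro ⟨x, y⟩ hq
    simp only [Finset.mem_filter, Finset.mem_product, Finset.mem_Icc] at hq
    obtain ⟨⟨⟨x1, xm⟩, y1, ym⟩, hxy⟩ := hq
    have hg : 0 < Nat.gcd x y := Nat.gcd_pos_of_pos_left y (by omega)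
    have hdx : Nat.gcd x y ∣ x := Nat.gcd_dvd_left x y
    have hdy : Nat.gcd x y ∣ y := Nat.gcd_dvd_right x y
    have hadd : (x + y) / Nat.gcd x y = x / Nat.gcd x y + y / Nat.gcd x y :=
      Nat.add_div_of_dvd_right hdx
    simp only [hadd, Nat.add_sub_cancel_left]
    simp [Nat.mul_div_cancel' hdx, Nat.mul_div_cancel' hdy]
  · rintro ⟨⟨h, k⟩, s⟩ hx
    rfl

lemma auxswap (m : ℕ) :
    (∑ q ∈ (Finset.Icc 1 m ×ˢ Finset.Icc 1 m).filter (fun q => q.2 < q.1),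
        m.choose q.1 * m.choose q.2)
    = ∑ q ∈ (Finset.Icc 1 m ×ˢ Finset.Icc 1 m).filter (fun q => q.1 < q.2),
        m.choose q.1 * m.choose q.2 := by
  refine Finset.sum_nbij' Prod.swap Prod.swap ?_ ?_ ?_ ?_ ?_ <;>
    rintro ⟨x, y⟩ hq <;>
    simp only [Finset.mem_filter, Finset.mem_product, Finset.mem_Icc, Prod.swap] at hq ⊢ <;>
    first
      | tauto
      | (refine ⟨⟨⟨?_, ?_⟩, ?_, ?_⟩, ?_⟩ <;> tauto)
      | exact Nat.mul_comm _ _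

lemma auxsum (m : ℕ) : ∑ x ∈ Finset.Icc 1 m, m.choose x = 2 ^ m - 1 := by
  have h0 : insert 0 (Finset.Icc 1 m) = Finset.range (m + 1) := by
    ext a; simp only [Finset.mem_insert, Finset.mem_Icc, Finset.mem_range]; omega
  have hr := Nat.sum_range_choose m
  rw [← h0, Finset.sum_insert (by simp)] at hr
  simp only [Nat.choose_zero_right] at hr
  omega

lemma auxsq (m : ℕ) : ∑ x ∈ Finset.Icc 1 m, m.choose x * m.choose x = (2 * m).choose m - 1 := by
  have hv : (m + m).choose m
      = ∑ ij ∈ Finset.HasAntidiagonal.antidiagonal m, m.choose ij.1 * m.choose ij.2 := Nat.add_choose_eq m m m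
  rw [Finset.Nat.sum_antidiagonal_eq_sum_range_succ_mk] at hv
  have hv2 : (m + m).choose m = ∑ k ∈ Finset.range (m + 1), m.choose k * m.choose k := by
    rw [hv]
    refine Finset.sum_congr rfl fun k hk => ?_
    rw [Nat.choose_symm (by simp only [Finset.mem_range] at hk; omega)]
  have h0 : insert 0 (Finset.Icc 1 m) = Finset.range (m + 1) := by
    ext a; simp only [Finset.mem_insert, Finset.mem_Icc, Finset.mem_range]; omega
  rw [← h0, Finset.sum_insert (by simp)] at hv2
  simp only [Nat.choose_zero_right] at hv2
  have : 2 * m = m + m := by omega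
  rw [this]
  omega

lemma auxkey (m : ℕ) :
    (∑ x ∈ Finset.Icc 1 m, m.choose x) * (∑ x ∈ Finset.Icc 1 m, m.choose x)
    = 2 * (∑ q ∈ (Finset.Icc 1 m ×ˢ Finset.Icc 1 m).filter (fun q => q.1 < q.2),
        m.choose q.1 * m.choose q.2)
      + ∑ x ∈ Finset.Icc 1 m, m.choose x * m.choose x := by
  rw [Finset.sum_mul_sum, ← Finset.sum_product']
  rw [← Finset.sum_filter_add_sum_filter_not (Finset.Icc 1 m ×ˢ Finset.Icc 1 m)
    (fun q : ℕ × ℕ => q.1 < q.2)]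
  rw [← Finset.sum_filter_add_sum_filter_not
    (((Finset.Icc 1 m ×ˢ Finset.Icc 1 m)).filter (fun q : ℕ × ℕ => ¬ q.1 < q.2))
    (fun q : ℕ × ℕ => q.2 < q.1)]
  have e1 : (((Finset.Icc 1 m ×ˢ Finset.Icc 1 m)).filter
      (fun q : ℕ × ℕ => ¬ q.1 < q.2)).filter (fun q : ℕ × ℕ => q.2 < q.1)
      = ((Finset.Icc 1 m ×ˢ Finset.Icc 1 m)).filter (fun q : ℕ × ℕ => q.2 < q.1) := by
    rw [Finset.filter_filter]
    refine Finset.filter_congr fun q _ => ?_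
    constructor
    · rintro ⟨-, h⟩; exact h
    · intro h; exact ⟨by omega, h⟩
  have e2 : ∑ q ∈ (((Finset.Icc 1 m ×ˢ Finset.Icc 1 m)).filter
      (fun q : ℕ × ℕ => ¬ q.1 < q.2)).filter (fun q : ℕ × ℕ => ¬ q.2 < q.1),
      m.choose q.1 * m.choose q.2 = ∑ x ∈ Finset.Icc 1 m, m.choose x * m.choose x := by
    refine Finset.sum_nbij' (fun q => q.1) (fun x => (x, x)) ?_ ?_ ?_ ?_ ?_
    · rintro ⟨x, y⟩ hq
      simp only [Finset.filter_filter, Finset.mem_filter, Finset.mem_product,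
        Finset.mem_Icc] at hq ⊢
      omega
    · intro x hx
      simp only [Finset.mem_Icc] at hx
      simp only [Finset.filter_filter, Finset.mem_filter, Finset.mem_product, Finset.mem_Icc]
      omega
    · rintro ⟨x, y⟩ hq
      simp only [Finset.filter_filter, Finset.mem_filter, Finset.mem_product,
        Finset.mem_Icc] at hq
      have : x = y := by omega
      simp [this]
    · intro x hx; rfl
    · rintro ⟨x, y⟩ hq
      simp only [Finset.filter_filter, Finset.mem_filter, Finset.mem_product,
        Finset.mem_Icc] at hq
      have : x = y := by omega
      simp [this]
  rw [e1, e2, auxswap]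
  ring

lemma auxT (m : ℕ) (hm : 1 ≤ m) :
    ((∑ q ∈ (Finset.Icc 1 m ×ˢ Finset.Icc 1 m).filter (fun q => q.1 < q.2),
        m.choose q.1 * m.choose q.2 : ℕ) : ℚ)
    = 2 ^ (2 * m - 1) - 2 ^ m - ((2 * m).choose m : ℚ) / 2 + 1 := by
  have key := auxkey m
  rw [auxsum, auxsq] at key
  have hC : 1 ≤ (2 * m).choose m := Nat.choose_pos (by omega)
  have h2m : 1 ≤ 2 ^ m := Nat.one_le_two_pow
  have hc := congrArg (Nat.cast : ℕ → ℚ) key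
  push_cast [Nat.cast_sub hC, Nat.cast_sub h2m] at hc
  have hp : (2 : ℚ) ^ m * 2 ^ m = 2 ^ (2 * m - 1) * 2 := by
    rw [← pow_succ, ← pow_add]; congr 1; omega
  push_cast
  linear_combination (-1/2 : ℚ) * hc + hp / 2

/-- Identity for fractions of the Farey subsequence `𝓕(𝔹(2m), m)`.
The outer sums range over reduced fractions `h/k` with `k ≤ 2m`, `h ≤ m`,
`k - h ≤ m`, lying in `(0/1, 1/2)` (i.e. `0 < h`, `2h < k`) and in `(1/2, 1/1)`
(i.e. `k < 2h`, `h < k`), respectively. -/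
theorem fareyB2_half_binomial_identity (m : ℕ) (hm : 1 < m) :
    ((∑ p ∈ (Finset.Icc 1 (2 * m) ×ˢ Finset.Icc 1 (2 * m)).filter
        (fun p => 2 * p.1 < p.2 ∧ Nat.Coprime p.1 p.2 ∧ p.1 ≤ m ∧ p.2 - p.1 ≤ m),
      ∑ s ∈ Finset.Icc 1 (m / (p.2 - p.1)),
        (m.choose (s * p.1)) * (m.choose (s * (p.2 - p.1))) : ℕ) : ℚ)
      = 2 ^ (2 * m - 1) - 2 ^ m - ((2 * m).choose m : ℚ) / 2 + 1 ∧
    ((∑ p ∈ (Finset.Icc 1 (2 * m) ×ˢ Finset.Icc 1 (2 * m)).filter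
        (fun p => p.2 < 2 * p.1 ∧ p.1 < p.2 ∧ Nat.Coprime p.1 p.2 ∧ p.1 ≤ m ∧ p.2 - p.1 ≤ m),
      ∑ s ∈ Finset.Icc 1 (m / p.1),
        (m.choose (s * p.1)) * (m.choose (s * (p.2 - p.1))) : ℕ) : ℚ)
      = 2 ^ (2 * m - 1) - 2 ^ m - ((2 * m).choose m : ℚ) / 2 + 1 := by
  constructor
  · rw [aux1 m (by omega)]
    exact auxT m (by omega)
  · rw [aux2 m (by omega), auxswap]
    exact auxT m (by omega)
end

section
/- Let $m > 1$ be an integer. Then the following four sums are all equal to $2^{2m-1} - 2^m - \tfrac{1}{2}\binom{2m}{m} - \sum_{t=1}^{\lfloor m/2 \rfloor} \binom{m}{2t}\binom{m}{t} + 1$: (a) $\sum_{h/k:\, 0/1 < h/k < 1/3} \sum_{s=1}^{\lfloor m/(k-h) \rfloor} \binom{m}{s(k-h)}\left(\binom{m}{s h} + \binom{m}{s(k-2h)}\right)$; (b) $\sum_{h/k:\, 1/3 < h/k < 1/2} \sum_{s=1}^{\lfloor m/(k-h) \rfloor} \binom{m}{s(k-h)}\left(\binom{m}{s h} + \binom{m}{s(k-2h)}\right)$;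 (c) $\sum_{h/k:\, 1/2 < h/k < 2/3} \sum_{s=1}^{\lfloor m/h \rfloor} \binom{m}{s h}\left(\binom{m}{s(k-h)} + \binom{m}{s(2h-k)}\right)$; (d) $\sum_{h/k:\, 2/3 < h/k < 1/1} \sum_{s=1}^{\lfloor m/h \rfloor} \binom{m}{s h}\left(\binom{m}{s(k-h)} + \binom{m}{s(2h-k)}\right)$; where each outer sum ranges over all reduced fractions $h/k \in \mathcal{F}(\mathbb{B}(2m),m)$ in the indicated open interval. -/
/-!
A fraction `h/k` of `𝓕(𝔹(2m), m)` together with a multiplier `s` is the same thing as the lattice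
point `(a, b) = s • (h, k - h)` of the box `[1, m]²`, with `s = gcd a b`. The four intervals become
the cones `2a < b`, `a < b < 2a`, `b < a < 2b`, `2b < a`, and each of the four sums becomes the sum
of `w(a, b) = C(m, b) (C(m, a) + C(m, b - a))` over one of them (with the coordinates swapped in
the last two). The shear `(a, b) ↦ (b - a, b)` preserves `w` and exchanges the first two cones.
Together with the ray `b = 2a` they fill the half-box `a < b`, on which the same shear gives
`∑ w = 2 ∑_{a < b} C(m, a) C(m, b) = (2^m - 1)² - (C(2m, m) - 1)`.
-/

open Finset

theorem sum_filter_lt_add_sum_filter_eq_add_sum_filter_gt {ι β M : Type*} [LinearOrder β]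
    [AddCommMonoid M] (s : Finset ι) (u v : ι → β) (f : ι → M) :
    ∑ i ∈ s with u i < v i, f i + ∑ i ∈ s with u i = v i, f i + ∑ i ∈ s with v i < u i, f i =
      ∑ i ∈ s, f i := by
  simp only [sum_filter, ← sum_add_distrib]
  refine sum_congr rfl fun i _ => ?_
  rcases lt_trichotomy (u i) (v i) with h | h | h
  · simp [h, h.ne, h.not_gt]
  · simp [h]
  · simp [h, h.ne', h.not_gt]

theorem sum_filter_swap {α M : Type*} [AddCommMonoid M] (s : Finset α) (C : α × α → Prop)
    [DecidablePred C] (f : α × α → M) :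
    ∑ y ∈ (s ×ˢ s).filter C, f y.swap = ∑ y ∈ (s ×ˢ s).filter (fun y => C y.swap), f y :=
  sum_nbij' Prod.swap Prod.swap (by simp +contextual) (by simp +contextual) (by simp) (by simp)
    (by simp)

theorem sq_sum_eq_sum_sq_add_two_mul_sum_lt {α R : Type*} [LinearOrder α] [CommSemiring R]
    (s : Finset α) (f : α → R) :
    (∑ a ∈ s, f a) ^ 2 =
      ∑ a ∈ s, f a ^ 2 + 2 * ∑ x ∈ (s ×ˢ s).filter (fun x => x.1 < x.2), f x.1 * f x.2 := by
  have hdiag : ∑ x ∈ (s ×ˢ s).filter (fun x => x.1 = x.2), f x.1 * f x.2 = ∑ a ∈ s, f a ^ 2 := by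
    simp [← diag_eq_filter, diag, sq]
  have hgt : ∑ x ∈ (s ×ˢ s).filter (fun x => x.2 < x.1), f x.1 * f x.2 =
      ∑ x ∈ (s ×ˢ s).filter (fun x => x.1 < x.2), f x.1 * f x.2 :=
    (sum_filter_swap s (fun x => x.1 < x.2) fun x => f x.1 * f x.2).symm.trans
      (sum_congr rfl fun _ _ => mul_comm _ _)
  rw [sq, sum_mul_sum, ← sum_product', ← sum_filter_lt_add_sum_filter_eq_add_sum_filter_gt _
    Prod.fst Prod.snd, hdiag, ← hgt]
  ring

theorem sum_filter_coprime_sum_multiples {M : Type*} [AddCommMonoid M] (m : ℕ)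
    (C : ℕ × ℕ → Prop) [DecidablePred C] (hC : ∀ s x, 0 < s → (C (s * x.1, s * x.2) ↔ C x))
    (f : ℕ × ℕ → M) :
    ∑ x ∈ (Icc 1 m ×ˢ Icc 1 m).filter (fun x => C x ∧ Nat.Coprime x.1 x.2),
        ∑ s ∈ Icc 1 (m / max x.1 x.2), f (s * x.1, s * x.2) =
      ∑ y ∈ (Icc 1 m ×ˢ Icc 1 m).filter C, f y := by
  rw [sum_sigma']
  refine sum_bij (fun x _ => (x.2 * x.1.1, x.2 * x.1.2)) ?_ ?_ ?_ (fun _ _ => rfl)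
  · rintro ⟨⟨h, d⟩, s⟩ hx
    simp only [mem_sigma, mem_filter, mem_product, mem_Icc] at hx ⊢
    obtain ⟨⟨⟨⟨h1, -⟩, d1, -⟩, hCx, -⟩, hs, hsm⟩ := hx
    rw [Nat.le_div_iff_mul_le (by omega)] at hsm
    exact ⟨⟨⟨Nat.mul_pos hs h1, (Nat.mul_le_mul_left s (le_max_left h d)).trans hsm⟩,
      Nat.mul_pos hs d1, (Nat.mul_le_mul_left s (le_max_right h d)).trans hsm⟩, (hC s _ hs).2 hCx⟩
  · rintro ⟨⟨h, d⟩, s⟩ hx ⟨⟨h', d'⟩, t⟩ hx' heq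
    simp only [mem_sigma, mem_filter, mem_product, mem_Icc, Prod.mk.injEq] at hx hx' heq
    have hst : s = t := by
      have := congrArg₂ Nat.gcd heq.1 heq.2
      rwa [Nat.gcd_mul_left, Nat.gcd_mul_left, hx.1.2.2, hx'.1.2.2, mul_one, mul_one] at this
    subst hst
    have hs : 0 < s := by omega
    rw [Nat.mul_left_cancel_iff hs, Nat.mul_left_cancel_iff hs] at heq
    rw [heq.1, heq.2]
  · rintro ⟨a, b⟩ hy
    simp only [mem_filter, mem_product, mem_Icc] at hy
    obtain ⟨⟨⟨a1, am⟩, b1, bm⟩, hCy⟩ := hy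
    obtain ⟨h, d, hcop, ha, hb⟩ := Nat.exists_coprime a b
    have hg : 0 < a.gcd b := Nat.gcd_pos_of_pos_left _ (by omega)
    refine ⟨⟨(h, d), a.gcd b⟩, ?_, by simp [← ha, ← hb, mul_comm]⟩
    generalize a.gcd b = g at hg ha hb
    subst ha hb
    have h1 : 0 < h := Nat.pos_of_mul_pos_right (by omega : 0 < h * g)
    have d1 : 0 < d := Nat.pos_of_mul_pos_right (by omega : 0 < d * g)
    simp only [mem_sigma, mem_filter, mem_product, mem_Icc]
    refine ⟨⟨⟨⟨h1, (Nat.le_mul_of_pos_right h hg).trans am⟩, d1,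
      (Nat.le_mul_of_pos_right d hg).trans bm⟩, ?_, hcop⟩, hg, ?_⟩
    · rw [← hC g _ hg]; simpa only [mul_comm g] using hCy
    · rw [Nat.le_div_iff_mul_le (by omega), mul_comm, ← max_mul_mul_right]
      exact max_le am bm

theorem sum_farey_filter_eq_sum_coprime {M : Type*} [AddCommMonoid M] (m : ℕ)
    (Q C : ℕ × ℕ → Prop) [DecidablePred Q] [DecidablePred C]
    (hQ : ∀ h k, 0 < h →
      (Q (h, k) ↔ h < k ∧ C (h, k - h) ∧ Nat.Coprime h k ∧ h ≤ m ∧ k - h ≤ m))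
    (F : ℕ × ℕ → M) :
    ∑ p ∈ (Icc 1 (2 * m) ×ˢ Icc 1 (2 * m)).filter Q, F p =
      ∑ x ∈ (Icc 1 m ×ˢ Icc 1 m).filter (fun x => C x ∧ Nat.Coprime x.1 x.2),
        F (x.1, x.1 + x.2) := by
  symm
  refine sum_nbij' (fun x => (x.1, x.1 + x.2)) (fun p => (p.1, p.2 - p.1)) ?_ ?_ ?_ ?_
    (fun _ _ => rfl)
  · rintro ⟨h, d⟩ hx
    simp only [mem_filter, mem_product, mem_Icc] at hx ⊢
    obtain ⟨⟨⟨h1, hm⟩, d1, dm⟩, hC, hcop⟩ := hx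
    rw [hQ _ _ h1, Nat.add_sub_cancel_left, Nat.coprime_self_add_right]
    exact ⟨⟨⟨h1, by omega⟩, by omega, by omega⟩, by omega, hC, hcop, hm, dm⟩
  · rintro ⟨h, k⟩ hp
    simp only [mem_filter, mem_product, mem_Icc] at hp ⊢
    obtain ⟨⟨⟨h1, -⟩, -⟩, hQhk⟩ := hp
    obtain ⟨hk, hC, hcop, hm, dm⟩ := (hQ _ _ h1).1 hQhk
    have hcop' : Nat.Coprime h (k - h) := by
      rwa [← Nat.coprime_self_add_right, Nat.add_sub_cancel' hk.le]
    exact ⟨⟨⟨h1, hm⟩, by omega, dm⟩, hC, hcop'⟩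
  · rintro ⟨h, d⟩ -
    simp
  · rintro ⟨h, k⟩ hp
    simp only [mem_filter, mem_product, mem_Icc] at hp
    have hk := ((hQ _ _ (by omega)).1 hp.2).1
    simp only [Prod.mk.injEq, true_and]
    omega

def pairWeight (m : ℕ) (y : ℕ × ℕ) : ℕ :=
  m.choose y.2 * (m.choose y.1 + m.choose (y.2 - y.1))

theorem sum_farey_lower_eq_sum_pairWeight (m : ℕ) (Q C : ℕ × ℕ → Prop) [DecidablePred Q]
    [DecidablePred C] (hC : ∀ s x, 0 < s → (C (s * x.1, s * x.2) ↔ C x))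
    (hQ : ∀ h k, 0 < h →
      (Q (h, k) ↔ h < k ∧ C (h, k - h) ∧ Nat.Coprime h k ∧ h ≤ m ∧ k - h ≤ m))
    (hlt : ∀ x, C x → x.1 < x.2) :
    ∑ p ∈ (Icc 1 (2 * m) ×ˢ Icc 1 (2 * m)).filter Q,
        ∑ s ∈ Icc 1 (m / (p.2 - p.1)),
          m.choose (s * (p.2 - p.1)) * (m.choose (s * p.1) + m.choose (s * (p.2 - 2 * p.1))) =
      ∑ y ∈ (Icc 1 m ×ˢ Icc 1 m).filter C, pairWeight m y := by
  rw [sum_farey_filter_eq_sum_coprime m Q C hQ, ← sum_filter_coprime_sum_multiples m C hC]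
  refine sum_congr rfl fun x hx => ?_
  have hx := hlt x (mem_filter.1 hx).2.1
  simp only [Nat.add_sub_cancel_left, max_eq_right hx.le, pairWeight]
  refine sum_congr rfl fun s _ => ?_
  rw [show x.1 + x.2 - 2 * x.1 = x.2 - x.1 by omega, Nat.mul_sub]

theorem sum_farey_upper_eq_sum_pairWeight_swap (m : ℕ) (Q C : ℕ × ℕ → Prop) [DecidablePred Q]
    [DecidablePred C] (hC : ∀ s x, 0 < s → (C (s * x.1, s * x.2) ↔ C x))
    (hQ : ∀ h k, 0 < h →
      (Q (h, k) ↔ h < k ∧ C (h, k - h) ∧ Nat.Coprime h k ∧ h ≤ m ∧ k - h ≤ m))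
    (hgt : ∀ x, C x → x.2 < x.1) :
    ∑ p ∈ (Icc 1 (2 * m) ×ˢ Icc 1 (2 * m)).filter Q,
        ∑ s ∈ Icc 1 (m / p.1),
          m.choose (s * p.1) * (m.choose (s * (p.2 - p.1)) + m.choose (s * (2 * p.1 - p.2))) =
      ∑ y ∈ (Icc 1 m ×ˢ Icc 1 m).filter C, pairWeight m y.swap := by
  rw [sum_farey_filter_eq_sum_coprime m Q C hQ, ← sum_filter_coprime_sum_multiples m C hC]
  refine sum_congr rfl fun x hx => ?_
  have hx := hgt x (mem_filter.1 hx).2.1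
  simp only [Nat.add_sub_cancel_left, max_eq_left hx.le, pairWeight, Prod.swap]
  refine sum_congr rfl fun s _ => ?_
  rw [show 2 * x.1 - (x.1 + x.2) = x.1 - x.2 by omega, Nat.mul_sub]

theorem pairWeight_sub_fst (m : ℕ) {a b : ℕ} (h : a ≤ b) :
    pairWeight m (b - a, b) = pairWeight m (a, b) := by
  simp only [pairWeight, Nat.sub_sub_self h, add_comm]

theorem sum_pairWeight_filter_lt (m : ℕ) :
    ∑ y ∈ (Icc 1 m ×ˢ Icc 1 m).filter (fun y => y.1 < y.2), pairWeight m y =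
      2 * ∑ y ∈ (Icc 1 m ×ˢ Icc 1 m).filter (fun y => y.1 < y.2), m.choose y.1 * m.choose y.2 := by
  have hrefl : ∑ y ∈ (Icc 1 m ×ˢ Icc 1 m).filter (fun y => y.1 < y.2),
      m.choose y.2 * m.choose (y.2 - y.1) =
      ∑ y ∈ (Icc 1 m ×ˢ Icc 1 m).filter (fun y => y.1 < y.2), m.choose y.1 * m.choose y.2 := by
    refine sum_nbij' (fun y => (y.2 - y.1, y.2)) (fun y => (y.2 - y.1, y.2)) ?_ ?_ ?_ ?_ ?_ <;>
      intro y hy <;> simp only [mem_filter, mem_product, mem_Icc] at hy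
    · simp only [mem_filter, mem_product, mem_Icc]; omega
    · simp only [mem_filter, mem_product, mem_Icc]; omega
    · exact Prod.ext (Nat.sub_sub_self hy.2.le) rfl
    · exact Prod.ext (Nat.sub_sub_self hy.2.le) rfl
    · exact mul_comm _ _
  simp only [pairWeight, mul_add, sum_add_distrib, hrefl, two_mul]
  exact congrArg (· + _) (sum_congr rfl fun _ _ => mul_comm _ _)

theorem sum_pairWeight_filter_two_mul_lt (m : ℕ) :
    ∑ y ∈ (Icc 1 m ×ˢ Icc 1 m).filter (fun y => y.1 < y.2 ∧ 2 * y.1 < y.2), pairWeight m y =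
      ∑ y ∈ (Icc 1 m ×ˢ Icc 1 m).filter (fun y => y.1 < y.2 ∧ y.2 < 2 * y.1), pairWeight m y := by
  refine sum_nbij' (fun y => (y.2 - y.1, y.2)) (fun y => (y.2 - y.1, y.2)) ?_ ?_ ?_ ?_ ?_ <;>
    intro y hy <;> simp only [mem_filter, mem_product, mem_Icc] at hy
  · simp only [mem_filter, mem_product, mem_Icc]; omega
  · simp only [mem_filter, mem_product, mem_Icc]; omega
  · exact Prod.ext (Nat.sub_sub_self hy.2.1.le) rfl
  · exact Prod.ext (Nat.sub_sub_self hy.2.1.le) rfl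
  · exact (pairWeight_sub_fst m hy.2.1.le).symm

theorem sum_pairWeight_filter_two_mul_eq (m : ℕ) :
    ∑ y ∈ (Icc 1 m ×ˢ Icc 1 m).filter (fun y => y.1 < y.2 ∧ 2 * y.1 = y.2), pairWeight m y =
      2 * ∑ t ∈ Icc 1 (m / 2), m.choose (2 * t) * m.choose t := by
  rw [mul_sum]
  symm
  refine sum_nbij' (fun t => (t, 2 * t)) Prod.fst ?_ ?_ (fun _ _ => rfl) ?_ ?_
  · intro t ht
    simp only [mem_filter, mem_product, mem_Icc, and_true] at ht ⊢
    omega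
  · intro y hy
    simp only [mem_filter, mem_product, mem_Icc] at hy ⊢
    omega
  · intro y hy
    exact Prod.ext rfl (mem_filter.1 hy).2.2
  · intro t _
    simp only [pairWeight, show 2 * t - t = t by omega]
    ring

theorem cast_sum_pairWeight_filter_two_mul_lt {m : ℕ} (hm : 0 < m) :
    ((∑ y ∈ (Icc 1 m ×ˢ Icc 1 m).filter (fun y => y.1 < y.2 ∧ 2 * y.1 < y.2), pairWeight m y : ℕ)
        : ℚ) =
      2 ^ (2 * m - 1) - 2 ^ m - ((2 * m).choose m : ℚ) / 2
        - (∑ t ∈ Icc 1 (m / 2), m.choose (2 * t) * m.choose t : ℕ) + 1 := by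
  have hsplit := sum_filter_lt_add_sum_filter_eq_add_sum_filter_gt
    ((Icc 1 m ×ˢ Icc 1 m).filter (fun y => y.1 < y.2)) (fun y => 2 * y.1) Prod.snd (pairWeight m)
  simp only [filter_filter] at hsplit
  rw [sum_pairWeight_filter_two_mul_eq, ← sum_pairWeight_filter_two_mul_lt,
    sum_pairWeight_filter_lt] at hsplit
  have hsq := sq_sum_eq_sum_sq_add_two_mul_sum_lt (Icc 1 m) (fun i => m.choose i)
  have hIcc (f : ℕ → ℕ) : ∑ i ∈ range (m + 1), f i = f 0 + ∑ i ∈ Icc 1 m, f i := by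
    rw [range_eq_Ico, sum_eq_sum_Ico_succ_bot m.succ_pos, Nat.succ_eq_add_one, zero_add,
      Ico_add_one_right_eq_Icc]
  have hpow := Nat.sum_range_choose m
  have hcentral := Nat.sum_range_choose_sq m
  rw [hIcc] at hpow hcentral
  have htwo : (2 : ℚ) ^ (2 * m - 1) * 2 = (2 ^ m) ^ 2 := by
    rw [← pow_succ, ← pow_mul, Nat.sub_add_cancel (by omega), mul_comm]
  simp only [Nat.choose_zero_right] at hpow hcentral
  generalize ∑ y ∈ (Icc 1 m ×ˢ Icc 1 m).filter (fun y => y.1 < y.2 ∧ 2 * y.1 < y.2),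
    pairWeight m y = A at hsplit ⊢
  generalize ∑ t ∈ Icc 1 (m / 2), m.choose (2 * t) * m.choose t = D at hsplit ⊢
  generalize ∑ y ∈ (Icc 1 m ×ˢ Icc 1 m).filter (fun y => y.1 < y.2),
    m.choose y.1 * m.choose y.2 = U at hsplit hsq
  generalize ∑ i ∈ Icc 1 m, m.choose i = X at hsq hpow
  generalize ∑ i ∈ Icc 1 m, m.choose i ^ 2 = Y at hsq hcentral
  qify at hsplit hsq hpow hcentral
  linear_combination hsplit / 2 - hsq / 2 + (X + 2 ^ m - 1 : ℚ) / 2 * hpow - hcentral / 2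
    - htwo / 2

/-- Identities for fractions of the Farey subsequence `𝓕(𝔹(2m), m)`.
The outer sums range over reduced fractions `h/k` with `k ≤ 2m`, `h ≤ m`,
`k - h ≤ m`, lying in `(0/1, 1/3)`, `(1/3, 1/2)`, `(1/2, 2/3)` and `(2/3, 1/1)`,
respectively; each of the four sums equals
`2^(2m-1) - 2^m - (1/2)·C(2m,m) - ∑_{1 ≤ t ≤ ⌊m/2⌋} C(m,2t)·C(m,t) + 1`. -/
theorem fareyB2_third_binomial_identities (m : ℕ) (hm : 1 < m) :
    ((∑ p ∈ (Finset.Icc 1 (2 * m) ×ˢ Finset.Icc 1 (2 * m)).filter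
        (fun p => 3 * p.1 < p.2 ∧ Nat.Coprime p.1 p.2 ∧ p.1 ≤ m ∧ p.2 - p.1 ≤ m),
      ∑ s ∈ Finset.Icc 1 (m / (p.2 - p.1)),
        (m.choose (s * (p.2 - p.1))) *
          ((m.choose (s * p.1)) + (m.choose (s * (p.2 - 2 * p.1)))) : ℕ) : ℚ)
      = 2 ^ (2 * m - 1) - 2 ^ m - ((2 * m).choose m : ℚ) / 2
          - (∑ t ∈ Finset.Icc 1 (m / 2), (m.choose (2 * t)) * (m.choose t) : ℕ) + 1 ∧
    ((∑ p ∈ (Finset.Icc 1 (2 * m) ×ˢ Finset.Icc 1 (2 * m)).filter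
        (fun p => p.2 < 3 * p.1 ∧ 2 * p.1 < p.2 ∧ Nat.Coprime p.1 p.2 ∧ p.1 ≤ m ∧ p.2 - p.1 ≤ m),
      ∑ s ∈ Finset.Icc 1 (m / (p.2 - p.1)),
        (m.choose (s * (p.2 - p.1))) *
          ((m.choose (s * p.1)) + (m.choose (s * (p.2 - 2 * p.1)))) : ℕ) : ℚ)
      = 2 ^ (2 * m - 1) - 2 ^ m - ((2 * m).choose m : ℚ) / 2
          - (∑ t ∈ Finset.Icc 1 (m / 2), (m.choose (2 * t)) * (m.choose t) : ℕ) + 1 ∧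
    ((∑ p ∈ (Finset.Icc 1 (2 * m) ×ˢ Finset.Icc 1 (2 * m)).filter
        (fun p => p.2 < 2 * p.1 ∧ 3 * p.1 < 2 * p.2 ∧ Nat.Coprime p.1 p.2 ∧
          p.1 ≤ m ∧ p.2 - p.1 ≤ m),
      ∑ s ∈ Finset.Icc 1 (m / p.1),
        (m.choose (s * p.1)) *
          ((m.choose (s * (p.2 - p.1))) + (m.choose (s * (2 * p.1 - p.2)))) : ℕ) : ℚ)
      = 2 ^ (2 * m - 1) - 2 ^ m - ((2 * m).choose m : ℚ) / 2
          - (∑ t ∈ Finset.Icc 1 (m / 2), (m.choose (2 * t)) * (m.choose t) : ℕ) + 1 ∧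
    ((∑ p ∈ (Finset.Icc 1 (2 * m) ×ˢ Finset.Icc 1 (2 * m)).filter
        (fun p => 2 * p.2 < 3 * p.1 ∧ p.1 < p.2 ∧ Nat.Coprime p.1 p.2 ∧
          p.1 ≤ m ∧ p.2 - p.1 ≤ m),
      ∑ s ∈ Finset.Icc 1 (m / p.1),
        (m.choose (s * p.1)) *
          ((m.choose (s * (p.2 - p.1))) + (m.choose (s * (2 * p.1 - p.2)))) : ℕ) : ℚ)
      = 2 ^ (2 * m - 1) - 2 ^ m - ((2 * m).choose m : ℚ) / 2
          - (∑ t ∈ Finset.Icc 1 (m / 2), (m.choose (2 * t)) * (m.choose t) : ℕ) + 1 := by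
  have hA := cast_sum_pairWeight_filter_two_mul_lt (by omega : 0 < m)
  have hB : ((∑ y ∈ (Icc 1 m ×ˢ Icc 1 m).filter (fun y => y.1 < y.2 ∧ y.2 < 2 * y.1),
      pairWeight m y : ℕ) : ℚ) = _ := sum_pairWeight_filter_two_mul_lt m ▸ hA
  refine ⟨?_, ?_, ?_, ?_⟩
  · rw [sum_farey_lower_eq_sum_pairWeight m _ (fun y => y.1 < y.2 ∧ 2 * y.1 < y.2)
      (fun s x hs => by simp only [mul_left_comm 2 s, Nat.mul_lt_mul_left hs]) ?_ fun _ hx => hx.1]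
    · exact hA
    · grind
  · rw [sum_farey_lower_eq_sum_pairWeight m _ (fun y => y.1 < y.2 ∧ y.2 < 2 * y.1)
      (fun s x hs => by simp only [mul_left_comm 2 s, Nat.mul_lt_mul_left hs]) ?_ fun _ hx => hx.1]
    · exact hB
    · grind
  · rw [sum_farey_upper_eq_sum_pairWeight_swap m _ (fun y => y.2 < y.1 ∧ y.1 < 2 * y.2)
      (fun s x hs => by simp only [mul_left_comm 2 s, Nat.mul_lt_mul_left hs]) ?_ fun _ hx => hx.1,
      sum_filter_swap]
    · exact hB
    · grind
  · rw [sum_farey_upper_eq_sum_pairWeight_swap m _ (fun y => y.2 < y.1 ∧ 2 * y.2 < y.1)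
      (fun s x hs => by simp only [mul_left_comm 2 s, Nat.mul_lt_mul_left hs]) ?_ fun _ hx => hx.1,
      sum_filter_swap]
    · exact hA
    · grind
end

section
/- Let $m > 1$ be an integer. Then $\sum_{h/k} \sum_{s=1}^{\lfloor m/k \rfloor} \binom{m}{s h}\binom{m}{s k} = 2^{2m-1} - 2^m - \tfrac{1}{2}\binom{2m}{m} + 1$, where the outer sum ranges over all reduced fractions $h/k \in \mathcal{F}_m$ with $0/1 < h/k < 1/1$. -/
open Finset

lemma farey_reindex (m : ℕ) :
    (∑ p ∈ (Finset.Icc 1 m ×ˢ Finset.Icc 1 m).filter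
        (fun p => p.1 < p.2 ∧ Nat.Coprime p.1 p.2),
      ∑ s ∈ Finset.Icc 1 (m / p.2),
        (m.choose (s * p.1)) * (m.choose (s * p.2)))
    = ∑ q ∈ (Finset.Icc 1 m ×ˢ Finset.Icc 1 m).filter (fun q => q.1 < q.2),
        m.choose q.1 * m.choose q.2 := by
  rw [Finset.sum_sigma']
  refine Finset.sum_nbij' (i := fun x => (x.2 * x.1.1, x.2 * x.1.2))
    (j := fun q => ⟨(q.1 / Nat.gcd q.1 q.2, q.2 / Nat.gcd q.1 q.2), Nat.gcd q.1 q.2⟩)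
    ?_ ?_ ?_ ?_ ?_
  · rintro ⟨⟨h, k⟩, s⟩ hx
    simp only [Finset.mem_sigma, Finset.mem_filter, Finset.mem_product, Finset.mem_Icc] at hx ⊢
    obtain ⟨⟨⟨⟨h1, hm1⟩, ⟨k1, km⟩⟩, hk, hcop⟩, s1, hs⟩ := hx
    have hk0 : 0 < k := k1
    have hskm : s * k ≤ m := by
      rwa [Nat.le_div_iff_mul_le hk0] at hs
    refine ⟨⟨⟨Nat.one_le_iff_ne_zero.mpr (by positivity), ?_⟩,
      ⟨Nat.one_le_iff_ne_zero.mpr (by positivity), hskm⟩⟩, ?_⟩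
    · exact le_trans (Nat.mul_le_mul_left s hk.le) hskm
    · exact Nat.mul_lt_mul_of_pos_left hk s1
  · rintro ⟨a, b⟩ hq
    simp only [Finset.mem_sigma, Finset.mem_filter, Finset.mem_product, Finset.mem_Icc] at hq ⊢
    obtain ⟨⟨⟨a1, am⟩, ⟨b1, bm⟩⟩, hab⟩ := hq
    have ha0 : 0 < a := a1
    have hb0 : 0 < b := b1
    have hg : 0 < Nat.gcd a b := Nat.gcd_pos_of_pos_left b ha0
    have hda : Nat.gcd a b ∣ a := Nat.gcd_dvd_left a b
    have hdb : Nat.gcd a b ∣ b := Nat.gcd_dvd_right a b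
    have hb0' : 0 < b / Nat.gcd a b := Nat.div_pos (Nat.le_of_dvd hb0 hdb) hg
    refine ⟨⟨⟨⟨Nat.div_pos (Nat.le_of_dvd ha0 hda) hg,
        le_trans (Nat.div_le_self _ _) am⟩,
      ⟨hb0', le_trans (Nat.div_le_self _ _) bm⟩⟩,
      ?_, Nat.coprime_div_gcd_div_gcd hg⟩, hg, ?_⟩
    · exact Nat.div_lt_div_of_lt_of_dvd hdb hab
    · rw [Nat.le_div_iff_mul_le hb0', Nat.mul_div_cancel' hdb]
      exact bm
  · rintro ⟨⟨h, k⟩, s⟩ hx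
    simp only [Finset.mem_sigma, Finset.mem_filter, Finset.mem_product, Finset.mem_Icc] at hx
    obtain ⟨⟨⟨⟨h1, hm1⟩, ⟨k1, km⟩⟩, hk, hcop⟩, s1, hs⟩ := hx
    have hs0 : 0 < s := s1
    have hgcd : Nat.gcd (s * h) (s * k) = s := by
      rw [Nat.gcd_mul_left, Nat.Coprime.gcd_eq_one hcop, mul_one]
    simp only [hgcd, Nat.mul_div_cancel_left _ hs0]
  · rintro ⟨a, b⟩ hq
    simp only [Finset.mem_filter, Finset.mem_product, Finset.mem_Icc] at hq
    obtain ⟨⟨⟨a1, am⟩, ⟨b1, bm⟩⟩, hab⟩ := hq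
    simp only [Nat.mul_div_cancel' (Nat.gcd_dvd_left a b),
      Nat.mul_div_cancel' (Nat.gcd_dvd_right a b)]
  · rintro ⟨⟨h, k⟩, s⟩ hx
    rfl

lemma range_succ_eq_insert (m : ℕ) : Finset.range (m + 1) = insert 0 (Finset.Icc 1 m) := by
  ext x
  simp only [Finset.mem_range, Finset.mem_insert, Finset.mem_Icc]
  omega

lemma sum_Icc_choose (m : ℕ) : (∑ a ∈ Finset.Icc 1 m, m.choose a) = 2 ^ m - 1 := by
  have h := Nat.sum_range_choose m
  rw [range_succ_eq_insert, Finset.sum_insert (by simp)] at h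
  simp at h
  omega

lemma sum_Icc_choose_sq (m : ℕ) :
    (∑ a ∈ Finset.Icc 1 m, m.choose a * m.choose a) = (2 * m).choose m - 1 := by
  have h : (m + m).choose m = ∑ ij ∈ Finset.HasAntidiagonal.antidiagonal m, m.choose ij.1 * m.choose ij.2 :=
    Nat.add_choose_eq m m m
  rw [Finset.Nat.sum_antidiagonal_eq_sum_range_succ_mk] at h
  have h2 : ∀ i ∈ Finset.range (m + 1), m.choose i * m.choose (m - i) = m.choose i * m.choose i := by
    intro i hi
    rw [Finset.mem_range] at hi
    rw [Nat.choose_symm (by omega : i ≤ m)]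
  rw [Finset.sum_congr rfl h2] at h
  rw [range_succ_eq_insert, Finset.sum_insert (by simp)] at h
  simp only [Nat.choose_zero_right, one_mul] at h
  rw [two_mul]
  omega

/-- Identity for fractions of the standard Farey sequence `𝓕_m`.
The outer sum ranges over reduced fractions `h/k ∈ 𝓕_m` with `0 < h/k < 1`,
i.e. coprime pairs `(h, k)` with `1 ≤ h < k ≤ m`. -/
theorem farey_binomial_identity (m : ℕ) (hm : 1 < m) :
    ((∑ p ∈ (Finset.Icc 1 m ×ˢ Finset.Icc 1 m).filter
        (fun p => p.1 < p.2 ∧ Nat.Coprime p.1 p.2),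
      ∑ s ∈ Finset.Icc 1 (m / p.2),
        (m.choose (s * p.1)) * (m.choose (s * p.2)) : ℕ) : ℚ)
      = 2 ^ (2 * m - 1) - 2 ^ m - ((2 * m).choose m : ℚ) / 2 + 1 := by
  rw [farey_reindex m]
  -- now compute ∑_{a<b} C a C b
  set A := Finset.Icc 1 m with hA
  set S := ∑ q ∈ (A ×ˢ A).filter (fun q => q.1 < q.2), m.choose q.1 * m.choose q.2 with hS
  have hswap : ∑ q ∈ (A ×ˢ A).filter (fun q => q.2 < q.1), m.choose q.1 * m.choose q.2 = S := by
    rw [hS]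
    refine Finset.sum_nbij' (i := Prod.swap) (j := Prod.swap) ?_ ?_ ?_ ?_ ?_ <;>
      simp [and_comm, mul_comm]
  have hsplit : (∑ a ∈ A, m.choose a) * (∑ a ∈ A, m.choose a)
      = 2 * S + ∑ a ∈ A, m.choose a * m.choose a := by
    rw [Finset.sum_mul_sum, ← Finset.sum_product']
    have e1 : (A ×ˢ A) = ((A ×ˢ A).filter (fun q => q.1 < q.2)) ∪
        ((A ×ˢ A).filter (fun q => q.2 < q.1)) ∪ ((A ×ˢ A).filter (fun q => q.1 = q.2)) := by
      ext q
      simp only [Finset.mem_union, Finset.mem_filter]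
      constructor
      · intro h; rcases lt_trichotomy q.1 q.2 with h'|h'|h' <;> tauto
      · tauto
    rw [e1, Finset.sum_union, Finset.sum_union, hswap]
    · have hdiag : ∑ q ∈ (A ×ˢ A).filter (fun q => q.1 = q.2), m.choose q.1 * m.choose q.2
          = ∑ a ∈ A, m.choose a * m.choose a := by
        refine Finset.sum_nbij' (i := Prod.fst) (j := fun a => (a, a)) ?_ ?_ ?_ ?_ ?_
        · rintro ⟨a, b⟩ hq
          simp only [Finset.mem_filter, Finset.mem_product] at hq
          exact hq.1.1
        · intro a ha
          simp only [Finset.mem_filter, Finset.mem_product]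
          exact ⟨⟨ha, ha⟩, by simp⟩
        · rintro ⟨a, b⟩ hq
          simp only [Finset.mem_filter] at hq
          have h2 : a = b := hq.2
          rw [h2]
        · intro a _; rfl
        · rintro ⟨a, b⟩ hq
          simp only [Finset.mem_filter] at hq
          have h2 : a = b := hq.2
          rw [h2]
      rw [hdiag]; ring
    · rw [Finset.disjoint_left]
      rintro q hq hq'
      simp only [Finset.mem_filter] at hq hq'
      omega
    · rw [Finset.disjoint_left]
      rintro q hq hq'
      simp only [Finset.mem_union, Finset.mem_filter] at hq hq'
      omega
  have hq1 := sum_Icc_choose m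
  have hq2 := sum_Icc_choose_sq m
  have h2m : 1 ≤ (2 * m).choose m := Nat.choose_pos (by omega)
  rw [hq1, hq2] at hsplit
  have hpow : 1 ≤ 2 ^ m := Nat.one_le_two_pow
  zify [hpow, h2m] at hsplit
  have hQ : ((2:ℚ)^m - 1) * ((2:ℚ)^m - 1)
      = 2 * (S:ℚ) + (((2*m).choose m : ℚ) - 1) := by exact_mod_cast hsplit
  have hp : (2:ℚ)^(2*m-1) * 2 = (2:ℚ)^m * 2^m := by
    rw [← pow_succ, ← pow_add]
    congr 1
    omega
  linear_combination -hQ / 2 - hp / 2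
end
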